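/- arXiv:0710.5309 — 8 statements merged into one kernel-verified Lean document; each statement's English description precedes it below -/
import Mathlib

section
/- Let E and F be dyadic wavelet sets in ℝ with interpolation map σ_E^F. Then the following are equivalent: (i) (E, F) is an interpolation pair, i.e. σ_E^F ∘ σ_E^F = id_ℝ almost everywhere; (ii) σ_E^F(E ∪ F) ⊆ E ∪ F modulo Lebesgue-null sets. -/
open MeasureTheory Set
open scoped Real symmDiff

noncomputable section

/-- An a.e. (modulo Lebesgue-null sets) partition of the set `A` by the family `P`. -/
def IsAEPartition {ι : Type*} (P : ι → Set ℝ) (A : Set ℝ) : Prop :=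
  volume (A ∆ (⋃ i, P i)) = 0 ∧ ∀ i j : ι, i ≠ j → volume (P i ∩ P j) = 0

/-- `E ⊆ ℝ` is a dyadic wavelet set: its `2πℤ`-translates and its `2ℤ`-dilates each
partition `ℝ` modulo Lebesgue-null sets. -/
def IsDyadicWaveletSet (E : Set ℝ) : Prop :=
  MeasurableSet E ∧
  (∀ᵐ x : ℝ ∂volume, ∃! n : ℤ, x + 2 * Real.pi * n ∈ E) ∧
  (∀ᵐ x : ℝ ∂volume, ∃! k : ℤ, (2 : ℝ) ^ k * x ∈ E)

/-- `σ` is (a representative of) the interpolation map `σ_E^F` for wavelet sets `E, F`. -/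
def IsInterpolationMap (E F : Set ℝ) (σ : ℝ → ℝ) : Prop :=
  Measurable σ ∧ σ 0 = 0 ∧
  (∀ᵐ s : ℝ ∂volume, s ∈ E → σ s ∈ F ∧ ∃ n : ℤ, σ s - s = 2 * Real.pi * n) ∧
  (∀ n : ℤ, ∀ᵐ s : ℝ ∂volume, (2 : ℝ) ^ (-n) * s ∈ E →
    σ s = (2 : ℝ) ^ n * σ ((2 : ℝ) ^ (-n) * s))

/-- The `2π`-congruence domain of a map `σ`. -/
def CongruenceDomain (σ : ℝ → ℝ) : Set ℝ :=
  {s : ℝ | ∃ n : ℤ, σ s - s = 2 * Real.pi * n}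

/-- `A` is `2π`-translation congruent to `B`. -/
def TransCongruent (A B : Set ℝ) : Prop :=
  ∃ P : ℤ → Set ℝ, (∀ n, MeasurableSet (P n)) ∧ IsAEPartition P A ∧
    IsAEPartition (fun (n : ℤ) => (fun x => x + 2 * Real.pi * (n : ℝ)) '' P n) B

/-- `A` is `2`-dilation congruent to `B`. -/
def DilCongruent (A B : Set ℝ) : Prop :=
  ∃ P : ℤ → Set ℝ, (∀ n, MeasurableSet (P n)) ∧ IsAEPartition P A ∧
    IsAEPartition (fun (n : ℤ) => (fun x => (2 : ℝ) ^ n * x) '' P n) B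

/-!
Up to null sets, `σ` commutes with every dilation by `2 ^ n` and sends every point of `E`
to a `2π`-translate lying in `F`; moreover `σ x - x` lies in the countable set
`2π ℤ · 2 ^ ℤ`, so `σ` pulls null sets back to null sets and all pointwise arguments may be
run along a.e. orbits of `σ`.

If `σ ∘ σ = id` and `x ∈ F`, dilating `σ x` into `E` and applying `σ` shows, by uniqueness of
the dilation of `x` into `F`, that `σ x ∈ E`. Conversely, if `σ (E ∪ F) ⊆ E ∪ F`, then `σ` maps
`F` back into `E` by `2π`-translations: otherwise a point `u ∈ F` with `2 ^ j u ∈ E`, `j > 0`,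
would lead, via `σ (2 ^ j σ u) = 2 ^ j σ (σ u)`, to a second dilate of `σ (σ u)` in `F`. Then
for `x ∈ E` both `x` and `σ (σ x)` lie in `E` and are `2π`-congruent, hence equal, and
homogeneity spreads `σ ∘ σ = id` to all of `ℝ`.
-/

namespace InterpolationPair

open AddCommGroup

lemma two_zpow_mul_modEq {a b p : ℝ} (h : a ≡ b [PMOD p]) {j : ℤ} (hj : 0 ≤ j) :
    (2 : ℝ) ^ j * a ≡ (2 : ℝ) ^ j * b [PMOD p] := by
  lift j to ℕ using hj
  simpa [nsmul_eq_mul] using (h.nsmul (n := 2 ^ j)).of_nsmul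

lemma ae_comp_of_ae_exists_eq_add {ι : Type*} [Countable ι] {f : ℝ → ℝ} (c : ι → ℝ)
    (hf : ∀ᵐ x, ∃ i, f x = x + c i) {p : ℝ → Prop} (hp : ∀ᵐ y, p y) :
    ∀ᵐ x, p (f x) := by
  have htrans : ∀ᵐ x, ∀ i, p (x + c i) := ae_all_iff.2 fun i =>
    (measurePreserving_add_right volume (c i)).quasiMeasurePreserving.ae hp
  filter_upwards [hf, htrans] with x ⟨i, hi⟩ hx
  exact hi ▸ hx i

lemma eq_of_mem_of_modEq {A : Set ℝ} {x y : ℝ} (hA : ∃! n : ℤ, x + 2 * π * n ∈ A)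
    (hx : x ∈ A) (hy : y ∈ A) (hxy : x ≡ y [PMOD 2 * π]) : y = x := by
  obtain ⟨n, hn⟩ := modEq_iff_eq_add_zsmul.1 hxy
  have hn' : y = x + 2 * π * n := by rw [hn, zsmul_eq_mul, mul_comm]
  have : n = 0 := hA.unique (hn' ▸ hy) (by simpa using hx)
  simpa [this] using hn'

lemma eq_zero_of_zpow_mul_mem {A : Set ℝ} {x : ℝ} {k : ℤ} (hA : ∃! k : ℤ, (2 : ℝ) ^ k * x ∈ A)
    (hx : x ∈ A) (hk : (2 : ℝ) ^ k * x ∈ A) : k = 0 :=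
  hA.unique hk (by simpa using hx)

def AtAllDilates (p : ℝ → Prop) (x : ℝ) : Prop :=
  ∀ l : ℤ, p ((2 : ℝ) ^ l * x)

namespace AtAllDilates

variable {p : ℝ → Prop} {x : ℝ}

lemma self (h : AtAllDilates p x) : p x := by
  simpa using h 0

lemma zpow_mul (h : AtAllDilates p x) (n : ℤ) : AtAllDilates p ((2 : ℝ) ^ n * x) := by
  intro l
  rw [← mul_assoc, ← zpow_add₀ two_ne_zero]
  exact h (l + n)

end AtAllDilates

lemma ae_atAllDilates {p : ℝ → Prop} (hp : ∀ᵐ x, p x) : ∀ᵐ x, AtAllDilates p x :=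
  ae_all_iff.2 fun l => (Measure.quasiMeasurePreserving_smul volume
    (zpow_ne_zero l (two_ne_zero : (2 : ℝ) ≠ 0))).ae hp

/-- The pointwise content, at `x`, of `IsDyadicWaveletSet E`, `IsDyadicWaveletSet F` and
`IsInterpolationMap E F σ`. -/
structure IsRegularPoint (E F : Set ℝ) (σ : ℝ → ℝ) (x : ℝ) : Prop where
  translate_E : ∃! n : ℤ, x + 2 * π * n ∈ E
  dilate_E : ∃! k : ℤ, (2 : ℝ) ^ k * x ∈ E
  translate_F : ∃! n : ℤ, x + 2 * π * n ∈ F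
  dilate_F : ∃! k : ℤ, (2 : ℝ) ^ k * x ∈ F
  mapsTo : x ∈ E → σ x ∈ F
  modEq : x ∈ E → x ≡ σ x [PMOD 2 * π]
  map_eq : ∀ n : ℤ, (2 : ℝ) ^ (-n) * x ∈ E → σ x = (2 : ℝ) ^ n * σ ((2 : ℝ) ^ (-n) * x)

variable {E F : Set ℝ} {σ : ℝ → ℝ}

lemma ae_isRegularPoint (hE : IsDyadicWaveletSet E) (hF : IsDyadicWaveletSet F)
    (hσ : IsInterpolationMap E F σ) : ∀ᵐ x, IsRegularPoint E F σ x := by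
  filter_upwards [hE.2.1, hE.2.2, hF.2.1, hF.2.2, hσ.2.2.1, ae_all_iff.2 hσ.2.2.2]
    with x htE hdE htF hdF hmaps hmap
  refine ⟨htE, hdE, htF, hdF, fun hx => (hmaps hx).1, fun hx => ?_, hmap⟩
  obtain ⟨n, hn⟩ := (hmaps hx).2
  exact modEq_iff_zsmul'.2 ⟨n, by rw [hn, zsmul_eq_mul, mul_comm]⟩

abbrev IsDilationRegular (E F : Set ℝ) (σ : ℝ → ℝ) : ℝ → Prop :=
  AtAllDilates (IsRegularPoint E F σ)

namespace IsDilationRegular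

variable {x : ℝ}

lemma map_zpow_mul (hx : IsDilationRegular E F σ x) (n : ℤ) :
    σ ((2 : ℝ) ^ n * x) = (2 : ℝ) ^ n * σ x := by
  obtain ⟨k, hk, -⟩ := hx.self.dilate_E
  have hσx : σ x = (2 : ℝ) ^ (-k) * σ ((2 : ℝ) ^ k * x) := by
    simpa using hx.self.map_eq (-k) (by simpa using hk)
  have hback : (2 : ℝ) ^ (-(n - k)) * ((2 : ℝ) ^ n * x) = (2 : ℝ) ^ k * x := by
    rw [← mul_assoc, ← zpow_add₀ two_ne_zero, neg_sub, sub_add_cancel]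
  have hσnx : σ ((2 : ℝ) ^ n * x) = (2 : ℝ) ^ (n - k) * σ ((2 : ℝ) ^ k * x) :=
    hback ▸ (hx n).map_eq (n - k) (hback ▸ hk)
  rw [hσnx, hσx, ← mul_assoc, ← zpow_add₀ two_ne_zero, sub_eq_add_neg]

lemma exists_map_eq_add (hx : IsDilationRegular E F σ x) :
    ∃ i : ℤ × ℤ, σ x = x + i.1 * (2 * π) * (2 : ℝ) ^ i.2 := by
  obtain ⟨k, hk, -⟩ := hx.self.dilate_E
  obtain ⟨m, hm⟩ := modEq_iff_zsmul'.1 ((hx k).modEq hk)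
  refine ⟨(m, -k), ?_⟩
  rw [hx.map_zpow_mul, zsmul_eq_mul, ← mul_sub] at hm
  have h2k : (2 : ℝ) ^ k ≠ 0 := zpow_ne_zero k two_ne_zero
  rw [zpow_neg, ← hm]
  field_simp
  ring

end IsDilationRegular

lemma ae_comp_of_ae_isDilationRegular (hreg : ∀ᵐ x, IsDilationRegular E F σ x)
    {p : ℝ → Prop} (hp : ∀ᵐ y, p y) : ∀ᵐ x, p (σ x) :=
  ae_comp_of_ae_exists_eq_add _ (hreg.mono fun _ hx => hx.exists_map_eq_add) hp

variable {x u : ℝ}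

lemma mem_left_of_map_map_eq (hx : IsDilationRegular E F σ x)
    (hσx : IsDilationRegular E F σ (σ x)) (hxx : σ (σ x) = x) (hxF : x ∈ F) : σ x ∈ E := by
  obtain ⟨k, hk, -⟩ := hσx.self.dilate_E
  have hkx : (2 : ℝ) ^ k * x ∈ F := by
    simpa [hσx.map_zpow_mul, hxx] using (hσx k).mapsTo hk
  have : k = 0 := eq_zero_of_zpow_mul_mem hx.self.dilate_F hxF hkx
  simpa [this] using hk

lemma map_map_eq_self_of_zpow_mul_mem (hu : IsDilationRegular E F σ u)
    (hσu : IsDilationRegular E F σ (σ u)) (hσσu : IsDilationRegular E F σ (σ (σ u)))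
    {j : ℤ} (hj : 0 < j) (hv : (2 : ℝ) ^ j * u ∈ E) (hσuE : σ u ∈ E)
    (hH : (2 : ℝ) ^ j * σ u ∈ E ∪ F → σ ((2 : ℝ) ^ j * σ u) ∈ E ∪ F) :
    σ (σ u) = u := by
  have hz : σ ((2 : ℝ) ^ j * u) = (2 : ℝ) ^ j * σ u := hu.map_zpow_mul j
  have hσz : σ ((2 : ℝ) ^ j * σ u) = (2 : ℝ) ^ j * σ (σ u) := hσu.map_zpow_mul j
  have hzF : (2 : ℝ) ^ j * σ u ∈ F := hz ▸ (hu j).mapsTo hv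
  rcases hH (Or.inr hzF) with hσzE | hσzF
  · have hcongr : (2 : ℝ) ^ j * u ≡ σ ((2 : ℝ) ^ j * σ u) [PMOD 2 * π] := by
      calc (2 : ℝ) ^ j * u ≡ σ ((2 : ℝ) ^ j * u) [PMOD 2 * π] := (hu j).modEq hv
        _ = (2 : ℝ) ^ j * σ u := hz
        _ ≡ (2 : ℝ) ^ j * σ (σ u) [PMOD 2 * π] :=
          two_zpow_mul_modEq (hσu.self.modEq hσuE) hj.le
        _ = σ ((2 : ℝ) ^ j * σ u) := hσz.symm
    have := eq_of_mem_of_modEq (hu j).translate_E hv hσzE hcongr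
    rw [hσz] at this
    exact mul_left_cancel₀ (zpow_ne_zero j two_ne_zero) this
  · -- `σ (σ u)` and its dilate `2 ^ j σ (σ u)` would both lie in `F`
    have := eq_zero_of_zpow_mul_mem hσσu.self.dilate_F (hσu.self.mapsTo hσuE) (hσz ▸ hσzF)
    omega

lemma map_mem_left_and_modEq_of_mem_right (hu : IsDilationRegular E F σ u)
    (hσu : IsDilationRegular E F σ (σ u)) (hσσu : IsDilationRegular E F σ (σ (σ u)))
    (huF : u ∈ F) (hσuH : σ u ∈ E ∪ F)
    (hH : AtAllDilates (fun y => y ∈ E ∪ F → σ y ∈ E ∪ F) (σ u)) :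
    σ u ∈ E ∧ u ≡ σ u [PMOD 2 * π] := by
  obtain ⟨j, hv, -⟩ := hu.self.dilate_E
  have hz : σ ((2 : ℝ) ^ j * u) = (2 : ℝ) ^ j * σ u := hu.map_zpow_mul j
  rcases hσuH with hσuE | hσuF
  · refine ⟨hσuE, ?_⟩
    rcases le_or_gt j 0 with hj | hj
    · have := two_zpow_mul_modEq ((hu j).modEq hv) (neg_nonneg.2 hj)
      rwa [hz, ← mul_assoc, ← mul_assoc, ← zpow_add₀ two_ne_zero, neg_add_cancel, zpow_zero,
        one_mul, one_mul] at this
    · have huu := map_map_eq_self_of_zpow_mul_mem hu hσu hσσu hj hv hσuE (hH j)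
      have := (hσu.self.modEq hσuE).symm
      rwa [huu] at this
  · have hj : j = 0 := eq_zero_of_zpow_mul_mem hσu.self.dilate_F hσuF (hz ▸ (hu j).mapsTo hv)
    rw [hj, zpow_zero, one_mul] at hv
    have hfix : σ u = u := eq_of_mem_of_modEq hu.self.translate_F huF hσuF (hu.self.modEq hv)
    rw [hfix]
    exact ⟨hv, modEq_rfl⟩

lemma map_map_eq_self_of_mem_left (hx : IsDilationRegular E F σ x)
    (hσx : IsDilationRegular E F σ (σ x)) (hσσx : IsDilationRegular E F σ (σ (σ x)))
    (hσσσx : IsDilationRegular E F σ (σ (σ (σ x))))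
    (hHσx : σ x ∈ E ∪ F → σ (σ x) ∈ E ∪ F)
    (hHσσx : AtAllDilates (fun y => y ∈ E ∪ F → σ y ∈ E ∪ F) (σ (σ x))) (hxE : x ∈ E) :
    σ (σ x) = x := by
  have hσxF : σ x ∈ F := hx.self.mapsTo hxE
  obtain ⟨hσσxE, hcongr⟩ :=
    map_mem_left_and_modEq_of_mem_right hσx hσσx hσσσx hσxF (hHσx (Or.inr hσxF)) hHσσx
  exact eq_of_mem_of_modEq hx.self.translate_E hxE hσσxE ((hx.self.modEq hxE).trans hcongr)

lemma map_map_eq_self (hx : IsDilationRegular E F σ x)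
    (hσx : IsDilationRegular E F σ (σ x)) (hσσx : IsDilationRegular E F σ (σ (σ x)))
    (hσσσx : IsDilationRegular E F σ (σ (σ (σ x))))
    (hHσx : AtAllDilates (fun y => y ∈ E ∪ F → σ y ∈ E ∪ F) (σ x))
    (hHσσx : AtAllDilates (fun y => y ∈ E ∪ F → σ y ∈ E ∪ F) (σ (σ x))) :
    σ (σ x) = x := by
  obtain ⟨k, hk, -⟩ := hx.self.dilate_E
  have e₁ := hx.map_zpow_mul k
  have e₂ := hσx.map_zpow_mul k
  have e₃ := hσσx.map_zpow_mul k
  have h := map_map_eq_self_of_mem_left (hx.zpow_mul k) (e₁ ▸ hσx.zpow_mul k)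
    (by rw [e₁, e₂]; exact hσσx.zpow_mul k) (by rw [e₁, e₂, e₃]; exact hσσσx.zpow_mul k)
    (e₁ ▸ e₂ ▸ (hHσx.zpow_mul k).self) (by rw [e₁, e₂]; exact hHσσx.zpow_mul k) hk
  rw [e₁, e₂] at h
  exact mul_left_cancel₀ (zpow_ne_zero k two_ne_zero) h

end InterpolationPair

open InterpolationPair

/-- Theorem 1 of the paper. For dyadic wavelet sets `E, F` with
interpolation map `σ = σ_E^F`, the pair `(E, F)` is an interpolation pair
(`σ ∘ σ = id` a.e.) if and only if `σ(E ∪ F) ⊆ E ∪ F` modulo Lebesgue-null sets. -/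
theorem stmt_0 (E F : Set ℝ) (hE : IsDyadicWaveletSet E) (hF : IsDyadicWaveletSet F)
    (σ : ℝ → ℝ) (hσ : IsInterpolationMap E F σ) :
    (∀ᵐ s : ℝ ∂volume, σ (σ s) = s) ↔ (∀ᵐ s : ℝ ∂volume, s ∈ E ∪ F → σ s ∈ E ∪ F) := by
  have hreg : ∀ᵐ x, IsDilationRegular E F σ x := ae_atAllDilates (ae_isRegularPoint hE hF hσ)
  have hcomp {p : ℝ → Prop} (hp : ∀ᵐ y, p y) : ∀ᵐ x, p (σ x) :=
    ae_comp_of_ae_isDilationRegular hreg hp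
  constructor
  · intro hσσ
    filter_upwards [hreg, hcomp hreg, hσσ] with x hx hσx hxx
    rintro (hxE | hxF)
    · exact Or.inr (hx.self.mapsTo hxE)
    · exact Or.inl (mem_left_of_map_map_eq hx hσx hxx hxF)
  · intro hH
    have hHdil := ae_atAllDilates hH
    filter_upwards [hreg, hcomp hreg, hcomp (hcomp hreg), hcomp (hcomp (hcomp hreg)),
      hcomp hHdil, hcomp (hcomp hHdil)] with x h₀ h₁ h₂ h₃ hH₁ hH₂
    exact map_map_eq_self h₀ h₁ h₂ h₃ hH₁ hH₂
end
end

section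
/- Let E and F be dyadic wavelet sets and let G be a dyadic wavelet set with G ⊆ E ∪ F modulo null sets. Then E ∩ F ⊆ G modulo Lebesgue-null sets. -/
open MeasureTheory Set
open scoped Real symmDiff

/-! Almost every `x ∈ E ∩ F` has a translate `x + 2πn ∈ G`, and since `G ⊆ E ∪ F` up to a null
set (whose countably many translates are still null) that translate lies in `E` or in `F`.
As `x` itself lies in both, uniqueness of the `2πℤ`-translate in a wavelet set forces `n = 0`,
i.e. `x ∈ G`. -/

lemma ae_forall_int_add_mul_notMem {S : Set ℝ} (hS : volume S = 0) (a : ℝ) :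
    ∀ᵐ x : ℝ ∂volume, ∀ n : ℤ, x + a * n ∉ S := by
  refine ae_all_iff.2 fun n => ?_
  have h : volume ((· + a * n) ⁻¹' S) = 0 := by rwa [measure_preimage_add_right]
  exact measure_eq_zero_iff_ae_notMem.1 h

lemma int_eq_zero_of_add_mul_mem {E : Set ℝ} {a x : ℝ} (hu : ∃! n : ℤ, x + a * n ∈ E)
    (hx : x ∈ E) {n : ℤ} (hn : x + a * n ∈ E) : n = 0 :=
  hu.unique hn (by simpa using hx)

/-- If `E, F, G` are dyadic wavelet sets and `G ⊆ E ∪ F` modulo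
null sets, then `E ∩ F ⊆ G` modulo Lebesgue-null sets. -/
theorem stmt_2 (E F G : Set ℝ) (hE : IsDyadicWaveletSet E) (hF : IsDyadicWaveletSet F)
    (hG : IsDyadicWaveletSet G) (hsub : volume (G \ (E ∪ F)) = 0) :
    volume ((E ∩ F) \ G) = 0 := by
  refine measure_eq_zero_iff_ae_notMem.2 ?_
  filter_upwards [hE.2.1, hF.2.1, hG.2.1, ae_forall_int_add_mul_notMem hsub (2 * π)]
    with x huE huF huG hnull
  rintro ⟨⟨hxE, hxF⟩, hxG⟩
  obtain ⟨n, hnG, -⟩ := huG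
  have hnEF : x + 2 * π * n ∈ E ∪ F := by
    by_contra h
    exact hnull n ⟨hnG, h⟩
  obtain rfl : n = 0 := hnEF.elim (int_eq_zero_of_add_mul_mem huE hxE)
    (int_eq_zero_of_add_mul_mem huF hxF)
  exact hxG (by simpa using hnG)
end

section
/- Let (E, F) be an interpolation pair of dyadic wavelet sets and let G ⊆ E ∪ F be a dyadic wavelet set. Then σ_E^G = id almost everywhere on E ∩ G and σ_E^G = σ_E^F almost everywhere on E ∖ G, and both (E, G) and (F, G) are interpolation pairs, i.e. (σ_E^G)² = id_ℝ and (σ_F^G)² = id_ℝ almost everywhere. -/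
open MeasureTheory Set
open scoped Real symmDiff

noncomputable section

/-!
An interpolation map `σ = σ_E^F` is a.e. homogeneous, `σ (2 ^ n * s) = 2 ^ n * σ s`, and on each
dilate `2 ^ (-k) • E` it is a translation by a multiple of `2 ^ (-k) * 2π`. Hence `σ` pulls
null sets back to null sets, and a.e. properties may be evaluated at `σ s`.

Since every wavelet set meets every coset of `2πℤ` exactly once and `G ⊆ E ∪ F`, `σ_E^G` fixes
`E ∩ G` and agrees with `σ_E^F` on `E \ G`. For `s ∈ E \ G`, the point `u = σ_E^F s` lies in
`G \ E`, so some dilate `2 ^ j * u` with `j ≠ 0` lies in `E \ G`, and then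
`σ_E^G (2 ^ j * u) = σ_E^F (2 ^ j * u) = 2 ^ j * s`; homogeneity gives `σ_E^G (σ_E^G s) = s`.
An involutive `σ_E^F` is also `σ_F^E`, so the same argument applies to `(F, G)`.
-/

open AddCommGroup

theorem modEq_two_pi_iff {a b : ℝ} : a ≡ b [PMOD 2 * π] ↔ ∃ n : ℤ, b - a = 2 * π * n := by
  simp only [modEq_iff_zsmul', zsmul_eq_mul, mul_comm]

theorem eq_of_modEq_two_pi_of_mem {S : Set ℝ} {x a b : ℝ}
    (hS : ∃! n : ℤ, x + 2 * π * n ∈ S) (ha : a ∈ S) (hb : b ∈ S)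
    (hxa : x ≡ a [PMOD 2 * π]) (hxb : x ≡ b [PMOD 2 * π]) : a = b := by
  obtain ⟨m, hm⟩ := modEq_two_pi_iff.1 hxa
  obtain ⟨n, hn⟩ := modEq_two_pi_iff.1 hxb
  have hmn : m = n :=
    hS.unique (by rwa [show x + 2 * π * m = a by linarith])
      (by rwa [show x + 2 * π * n = b by linarith])
  subst hmn
  linarith

theorem two_zpow_mul_two_zpow_mul (a b : ℤ) (x : ℝ) :
    (2 : ℝ) ^ a * ((2 : ℝ) ^ b * x) = (2 : ℝ) ^ (a + b) * x := by
  rw [← mul_assoc, ← zpow_add₀ two_ne_zero]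

theorem ae_zpow_mul {p : ℝ → Prop} (h : ∀ᵐ x, p x) : ∀ᵐ x, ∀ k : ℤ, p ((2 : ℝ) ^ k * x) :=
  ae_all_iff.2 fun k =>
    (Measure.quasiMeasurePreserving_smul volume (zpow_ne_zero k two_ne_zero)).ae h

theorem ae_add_const {p : ℝ → Prop} (h : ∀ᵐ x, p x) (c : ℝ) : ∀ᵐ x, p (x + c) :=
  (measurePreserving_add_right volume c).quasiMeasurePreserving.ae h

namespace IsDyadicWaveletSet

variable {E : Set ℝ}

theorem ae_existsUnique_add (hE : IsDyadicWaveletSet E) :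
    ∀ᵐ x, ∃! n : ℤ, x + 2 * π * n ∈ E :=
  hE.2.1

theorem ae_existsUnique_zpow_mul (hE : IsDyadicWaveletSet E) :
    ∀ᵐ x, ∃! k : ℤ, (2 : ℝ) ^ k * x ∈ E :=
  hE.2.2

end IsDyadicWaveletSet

namespace IsInterpolationMap

variable {E F G : Set ℝ} {σ : ℝ → ℝ}

theorem ae_mem_modEq (hσ : IsInterpolationMap E F σ) :
    ∀ᵐ s, s ∈ E → σ s ∈ F ∧ s ≡ σ s [PMOD 2 * π] :=
  hσ.2.2.1.mono fun _ hs hsE => ⟨(hs hsE).1, modEq_two_pi_iff.2 (hs hsE).2⟩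

theorem ae_map_zpow_mul (hE : IsDyadicWaveletSet E) (hσ : IsInterpolationMap E F σ) :
    ∀ᵐ s, ∀ n : ℤ, σ ((2 : ℝ) ^ n * s) = (2 : ℝ) ^ n * σ s := by
  filter_upwards [hE.ae_existsUnique_zpow_mul, ae_zpow_mul (ae_all_iff.2 hσ.2.2.2)]
    with s ⟨k, hk, _⟩ hhom n
  have hs := hhom 0 (-k)
  have hns := hhom n (n - k)
  rw [zpow_zero, one_mul, neg_neg] at hs
  rw [two_zpow_mul_two_zpow_mul, show -(n - k) + n = k by ring] at hns
  rw [hns hk, hs hk, two_zpow_mul_two_zpow_mul, ← sub_eq_add_neg]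

theorem ae_comp (hE : IsDyadicWaveletSet E) (hσ : IsInterpolationMap E F σ) {p : ℝ → Prop}
    (h : ∀ᵐ x, p x) : ∀ᵐ s, p (σ s) := by
  have htrans : ∀ᵐ s, ∀ km : ℤ × ℤ, p (s + (2 : ℝ) ^ (-km.1) * (2 * π * km.2)) :=
    ae_all_iff.2 fun km => ae_add_const h _
  filter_upwards [hE.ae_existsUnique_zpow_mul, hσ.ae_map_zpow_mul hE,
    ae_zpow_mul hσ.ae_mem_modEq, htrans] with s ⟨k, hk, _⟩ hhom hcong htr
  obtain ⟨m, hm⟩ := modEq_two_pi_iff.1 (hcong k hk).2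
  have hσs : σ s = s + (2 : ℝ) ^ (-k) * (2 * π * m) := by
    rw [← hm, hhom, mul_sub, two_zpow_mul_two_zpow_mul, two_zpow_mul_two_zpow_mul,
      neg_add_cancel, zpow_zero, one_mul, one_mul, add_sub_cancel]
  exact hσs ▸ htr (k, m)

theorem ae_involutive_of_ae_mem (hE : IsDyadicWaveletSet E) (hσ : IsInterpolationMap E F σ)
    (h : ∀ᵐ s, s ∈ E → σ (σ s) = s) : ∀ᵐ s, σ (σ s) = s := by
  filter_upwards [hE.ae_existsUnique_zpow_mul, hσ.ae_map_zpow_mul hE,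
    hσ.ae_comp hE (hσ.ae_map_zpow_mul hE), ae_zpow_mul h] with s ⟨k, hk, _⟩ hhom hhom' hE'
  refine mul_left_cancel₀ (zpow_ne_zero k two_ne_zero) ?_
  rw [← hhom' k, ← hhom k, hE' k hk]

theorem symm_of_ae_involutive (hE : IsDyadicWaveletSet E) (hF : IsDyadicWaveletSet F)
    (hσ : IsInterpolationMap E F σ) (hinv : ∀ᵐ s, σ (σ s) = s) : IsInterpolationMap F E σ := by
  have hhom := hσ.ae_map_zpow_mul hE
  refine ⟨hσ.1, hσ.2.1, ?_, fun n => hhom.mono fun s hs _ => ?_⟩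
  · filter_upwards [hinv, hF.ae_existsUnique_zpow_mul,
      hσ.ae_comp hE hE.ae_existsUnique_zpow_mul, hσ.ae_comp hE hhom,
      hσ.ae_comp hE (ae_zpow_mul hσ.ae_mem_modEq)] with x hxx hxF ⟨k, hk, _⟩ hhomy hcongy hx
    have hkx : (2 : ℝ) ^ k * x ∈ F := by
      rw [← hxx, ← hhomy k]
      exact (hcongy k hk).1
    obtain rfl : k = 0 := hxF.unique hkx (by simpa using hx)
    have hcong0 := hcongy 0
    rw [zpow_zero, one_mul] at hk hcong0
    exact ⟨hk, modEq_two_pi_iff.1 (hxx ▸ (hcong0 hk).2).symm⟩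
  · rw [hs, two_zpow_mul_two_zpow_mul, add_neg_cancel, zpow_zero, one_mul]

theorem ae_eq_self_of_mem_inter (hG : IsDyadicWaveletSet G) (hσ : IsInterpolationMap E G σ) :
    ∀ᵐ s, s ∈ E ∩ G → σ s = s := by
  filter_upwards [hσ.ae_mem_modEq, hG.ae_existsUnique_add] with s hs hsG ⟨hsE, hsG'⟩
  exact eq_of_modEq_two_pi_of_mem hsG (hs hsE).1 hsG' (hs hsE).2 modEq_rfl

end IsInterpolationMap

section InterpolationPair

variable {E F G : Set ℝ} {σEF σEG : ℝ → ℝ}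

theorem ae_interpolationMap_eq_of_mem_diff (hE : IsDyadicWaveletSet E)
    (hF : IsDyadicWaveletSet F) (hGsub : G ⊆ E ∪ F) (hσEF : IsInterpolationMap E F σEF)
    (hσEG : IsInterpolationMap E G σEG) : ∀ᵐ s, s ∈ E \ G → σEG s = σEF s := by
  filter_upwards [hσEF.ae_mem_modEq, hσEG.ae_mem_modEq, hE.ae_existsUnique_add,
    hF.ae_existsUnique_add] with s hEF hEG hEtile hFtile ⟨hsE, hsG⟩
  obtain ⟨hGs, hcG⟩ := hEG hsE
  obtain ⟨hFs, hcF⟩ := hEF hsE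
  rcases hGsub hGs with hGE | hGF
  · exact absurd (eq_of_modEq_two_pi_of_mem hEtile hGE hsE hcG modEq_rfl ▸ hGs) hsG
  · exact eq_of_modEq_two_pi_of_mem hFtile hGF hFs hcG hcF

theorem ae_interpolationMap_involutive_of_subset_union (hE : IsDyadicWaveletSet E)
    (hF : IsDyadicWaveletSet F) (hG : IsDyadicWaveletSet G) (hGsub : G ⊆ E ∪ F)
    (hσEF : IsInterpolationMap E F σEF) (hpair : ∀ᵐ s, σEF (σEF s) = s)
    (hσEG : IsInterpolationMap E G σEG) : ∀ᵐ s, σEG (σEG s) = s := by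
  have hagree := ae_interpolationMap_eq_of_mem_diff hE hF hGsub hσEF hσEG
  refine hσEG.ae_involutive_of_ae_mem hE ?_
  filter_upwards [hσEG.ae_eq_self_of_mem_inter hG, hagree, hpair, hE.ae_existsUnique_add,
    hσEG.ae_mem_modEq, hσEF.ae_comp hE hE.ae_existsUnique_zpow_mul,
    hσEF.ae_comp hE hG.ae_existsUnique_zpow_mul, hσEF.ae_comp hE (hσEF.ae_map_zpow_mul hE),
    hσEF.ae_comp hE (hσEG.ae_map_zpow_mul hE), hσEF.ae_comp hE (ae_zpow_mul hagree)]
    with s hfix hsagree hspair hEtile hsEG ⟨j, hj, _⟩ hGdil hhomEF hhomEG hagree' hsE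
  by_cases hsG : s ∈ G
  · rw [hfix ⟨hsE, hsG⟩, hfix ⟨hsE, hsG⟩]
  have hu := hsagree ⟨hsE, hsG⟩
  obtain ⟨huG, hsu⟩ := hsEG hsE
  rw [hu] at huG hsu ⊢
  have hj0 : j ≠ 0 := by
    rintro rfl
    rw [zpow_zero, one_mul] at hj
    exact hsG (eq_of_modEq_two_pi_of_mem hEtile hj hsE hsu modEq_rfl ▸ huG)
  have hjG : (2 : ℝ) ^ j * σEF s ∉ G := fun h => hj0 (hGdil.unique h (by simpa using huG))
  refine mul_left_cancel₀ (zpow_ne_zero j two_ne_zero) ?_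
  rw [← hhomEG j, hagree' j ⟨hj, hjG⟩, hhomEF j, hspair]

end InterpolationPair

/-- Let `(E, F)` be an interpolation pair of dyadic wavelet sets and
`G ⊆ E ∪ F` a dyadic wavelet set.  Then `σ_E^G = id` a.e. on `E ∩ G`,
`σ_E^G = σ_E^F` a.e. on `E \ G`, and both `(E, G)` and `(F, G)` are interpolation
pairs. -/
theorem stmt_3 (E F G : Set ℝ) (hE : IsDyadicWaveletSet E) (hF : IsDyadicWaveletSet F)
    (hG : IsDyadicWaveletSet G) (hGsub : G ⊆ E ∪ F)
    (σEF σEG σFG : ℝ → ℝ)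
    (hσEF : IsInterpolationMap E F σEF)
    (hpair : ∀ᵐ s : ℝ ∂volume, σEF (σEF s) = s)
    (hσEG : IsInterpolationMap E G σEG)
    (hσFG : IsInterpolationMap F G σFG) :
    (∀ᵐ s : ℝ ∂volume, s ∈ E ∩ G → σEG s = s) ∧
    (∀ᵐ s : ℝ ∂volume, s ∈ E \ G → σEG s = σEF s) ∧
    (∀ᵐ s : ℝ ∂volume, σEG (σEG s) = s) ∧
    (∀ᵐ s : ℝ ∂volume, σFG (σFG s) = s) := by
  have hσFE := hσEF.symm_of_ae_involutive hE hF hpair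
  exact ⟨hσEG.ae_eq_self_of_mem_inter hG,
    ae_interpolationMap_eq_of_mem_diff hE hF hGsub hσEF hσEG,
    ae_interpolationMap_involutive_of_subset_union hE hF hG hGsub hσEF hpair hσEG,
    ae_interpolationMap_involutive_of_subset_union hF hE hG (union_comm E F ▸ hGsub) hσFE hpair
      hσFG⟩
end
end

section
/- Let E, F be dyadic wavelet sets and for n, k ∈ ℤ set E_{n,k} = E ∩ (F − 2nπ) ∩ 2^{-k}F. Then (E, F) is an interpolation pair if and only if for all nonzero integers n, k, m, l: whenever E_{n,k} ∩ (2^l E_{m,l} − 2nπ) has positive Lebesgue measure, one has n + 2^l·m = 0. Furthermore, for any such quadruple (n,k,m,l) with E_{n,k} ∩ (2^l E_{m,l} − 2nπ) of positive measure, one also has k = −l. -/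
open MeasureTheory Set
open scoped Real symmDiff

noncomputable section

/-- `E_{n,k} = E ∩ (F − 2nπ) ∩ 2^{-k}F`. -/
def Enk (E F : Set ℝ) (n k : ℤ) : Set ℝ :=
  E ∩ {x : ℝ | x + 2 * Real.pi * n ∈ F} ∩ {x : ℝ | (2 : ℝ) ^ k * x ∈ F}

/-- `E_{n,k} ∩ (2^l E_{m,l} − 2nπ)`. -/
def EnkTest (E F : Set ℝ) (n k m l : ℤ) : Set ℝ :=
  Enk E F n k ∩ {x : ℝ | (2 : ℝ) ^ (-l) * (x + 2 * Real.pi * n) ∈ Enk E F m l}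

/-!
On `E` the interpolation map is the translation `s ↦ s + 2πn` landing in `F`, and it commutes
with dilations by powers of `2`. So if `s ∈ E_{n,k}` and `s + 2πn = 2^l u` with `u ∈ E_{m,l}`,
then `σ (σ (2^c s)) = 2^c (s + 2π(n + 2^l m))` for all `c`; almost every real number is such
a `2^c s`.
At such a point either all of `n, k, m, l` vanish or none does, and `k = -l` follows from
`n + 2^l m = 0` because then `2^{-l} s ∈ F`. Positivity of the measure of
`E_{n,k} ∩ (2^l E_{m,l} − 2nπ)` transfers these pointwise identities to almost everywhere ones.
-/

lemma ae_comp_mul_add {P : ℝ → Prop} (h : ∀ᵐ t, P t) {c : ℝ} (hc : c ≠ 0) (d : ℝ) :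
    ∀ᵐ s, P (c * s + d) := by
  rw [ae_iff] at h ⊢
  change volume ((c * ·) ⁻¹' ((· + d) ⁻¹' {t | ¬ P t})) = 0
  rw [Real.volume_preimage_mul_left hc, measure_preimage_add_right, h, mul_zero]

lemma two_zpow_neg_mul_two_zpow_mul (l : ℤ) (x : ℝ) : (2 : ℝ) ^ (-l) * (2 ^ l * x) = x := by
  rw [← mul_assoc, zpow_neg_mul_zpow_self l two_ne_zero, one_mul]

lemma two_zpow_mul_two_zpow_neg_mul (l : ℤ) (x : ℝ) : (2 : ℝ) ^ l * (2 ^ (-l) * x) = x := by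
  simpa using two_zpow_neg_mul_two_zpow_mul (-l) x

structure IsTilingPoint (E : Set ℝ) (t : ℝ) : Prop where
  translate : ∃! n : ℤ, t + 2 * π * n ∈ E
  dilate : ∃! j : ℤ, (2 : ℝ) ^ j * t ∈ E

lemma IsDyadicWaveletSet.ae_isTilingPoint {E : Set ℝ} (hE : IsDyadicWaveletSet E) :
    ∀ᵐ t, IsTilingPoint E t :=
  (hE.2.1.and hE.2.2).mono fun _ h => ⟨h.1, h.2⟩

lemma IsTilingPoint.exists_two_zpow_neg_mul_mem {E : Set ℝ} {t : ℝ} (h : IsTilingPoint E t) :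
    ∃ l : ℤ, (2 : ℝ) ^ (-l) * t ∈ E :=
  let ⟨j, hj, _⟩ := h.dilate
  ⟨-j, by rwa [neg_neg]⟩

section Enk

variable {E F : Set ℝ} {n k m l : ℤ} {x : ℝ}

lemma eq_zero_iff_of_mem_Enk (hx : IsTilingPoint F x) (h : x ∈ Enk E F n k) :
    n = 0 ↔ k = 0 := by
  obtain ⟨⟨-, hn⟩, hk⟩ := h
  constructor
  · rintro rfl
    exact hx.dilate.unique hk (by simpa using hn)
  · rintro rfl
    exact hx.translate.unique hn (by simpa using hk)

lemma eq_zero_iff_of_mem_EnkTest (hx : IsTilingPoint E x) (h : x ∈ EnkTest E F n k m l) :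
    n = 0 ↔ l = 0 := by
  obtain ⟨⟨⟨hxE, -⟩, -⟩, ⟨⟨huE, -⟩, -⟩⟩ := h
  constructor
  · rintro rfl
    have : -l = 0 := hx.dilate.unique (by simpa using huE) (by simpa using hxE)
    omega
  · rintro rfl
    exact hx.translate.unique (by simpa using huE) (by simpa using hxE)

lemma eq_neg_of_mem_EnkTest (hx : IsTilingPoint F x) (h : x ∈ EnkTest E F n k m l)
    (hnm : (n : ℝ) + 2 ^ l * m = 0) : k = -l := by
  obtain ⟨⟨-, hk⟩, ⟨-, hm⟩, -⟩ := h
  have hu : (2 : ℝ) ^ (-l) * (x + 2 * π * n) + 2 * π * m = 2 ^ (-l) * x := by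
    linear_combination
      (2 * π * 2 ^ (-l)) * hnm - 2 * π * m * zpow_neg_mul_zpow_self l (two_ne_zero' ℝ)
  exact hx.dilate.unique hk (by rw [← hu]; exact hm)

end Enk

structure IsRegularPoint (E F : Set ℝ) (σ : ℝ → ℝ) (t : ℝ) : Prop where
  tiling_E : IsTilingPoint E t
  tiling_F : IsTilingPoint F t
  sigma_mem : t ∈ E → σ t ∈ F ∧ ∃ n : ℤ, σ t - t = 2 * π * n
  sigma_eq : ∀ c : ℤ, (2 : ℝ) ^ (-c) * t ∈ E → σ t = 2 ^ c * σ (2 ^ (-c) * t)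
  notMem_of_null : ∀ n k m l : ℤ, volume (EnkTest E F n k m l) = 0 → t ∉ EnkTest E F n k m l

/-- The orbit is countable, so almost every `s` has a regular orbit; it is closed under the
dilations and integer translations the pointwise arguments need. -/
def IsRegularOrbit (E F : Set ℝ) (σ : ℝ → ℝ) (s : ℝ) : Prop :=
  ∀ (a : ℤ) (q : ℚ), IsRegularPoint E F σ (2 ^ a * s + 2 * π * q)

section Regular

variable {E F : Set ℝ} {σ : ℝ → ℝ}

lemma IsInterpolationMap.ae_isRegularPoint (hE : IsDyadicWaveletSet E)
    (hF : IsDyadicWaveletSet F) (hσ : IsInterpolationMap E F σ) :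
    ∀ᵐ t, IsRegularPoint E F σ t := by
  have hnull : ∀ᵐ t, ∀ n k m l : ℤ,
      volume (EnkTest E F n k m l) = 0 → t ∉ EnkTest E F n k m l := by
    simp only [ae_all_iff]
    exact fun n k m l => measure_eq_zero_iff_ae_notMem.1
  filter_upwards [hE.ae_isTilingPoint, hF.ae_isTilingPoint, hσ.2.2.1, ae_all_iff.2 hσ.2.2.2,
    hnull] with t hE hF hmem heq hnull
  exact ⟨hE, hF, hmem, heq, hnull⟩

lemma IsInterpolationMap.ae_isRegularOrbit (hE : IsDyadicWaveletSet E)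
    (hF : IsDyadicWaveletSet F) (hσ : IsInterpolationMap E F σ) :
    ∀ᵐ s, IsRegularOrbit E F σ s := by
  simp only [IsRegularOrbit, ae_all_iff]
  exact fun a _ => ae_comp_mul_add (hσ.ae_isRegularPoint hE hF) (zpow_ne_zero a two_ne_zero) _

namespace IsRegularOrbit

variable {s : ℝ}

lemma isRegularPoint (h : IsRegularOrbit E F σ s) : IsRegularPoint E F σ s := by
  simpa using h 0 0

lemma two_zpow_mul (h : IsRegularOrbit E F σ s) (b : ℤ) : IsRegularOrbit E F σ (2 ^ b * s) :=
  fun a q => by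
    simpa only [zpow_add₀ (two_ne_zero' ℝ), mul_assoc (2 ^ a : ℝ)] using h (a + b) q

lemma add_int (h : IsRegularOrbit E F σ s) (n : ℤ) : IsRegularOrbit E F σ (s + 2 * π * n) :=
  fun a q => by
    convert h a (2 ^ a * n + q) using 1
    push_cast
    ring

lemma sigma_two_zpow_mul (h : IsRegularOrbit E F σ s) (hs : s ∈ E) {m : ℤ}
    (hm : s + 2 * π * m ∈ F) (c : ℤ) : σ (2 ^ c * s) = 2 ^ c * (s + 2 * π * m) := by
  obtain ⟨hσF, n, hn⟩ := h.isRegularPoint.sigma_mem hs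
  have hσs : σ s = s + 2 * π * n := by linarith
  obtain rfl : n = m := h.isRegularPoint.tiling_F.translate.unique (hσs ▸ hσF) hm
  have hc := (h.two_zpow_mul c).isRegularPoint.sigma_eq c
  rw [two_zpow_neg_mul_two_zpow_mul] at hc
  rw [hc hs, hσs]

lemma sigma_sigma_two_zpow_mul (h : IsRegularOrbit E F σ s) {n k m l : ℤ}
    (hs : s ∈ EnkTest E F n k m l) (c : ℤ) :
    σ (σ (2 ^ c * s)) = 2 ^ c * (s + 2 * π * (n + 2 ^ l * m)) := by
  obtain ⟨⟨⟨hsE, hsn⟩, -⟩, ⟨⟨huE, hum⟩, -⟩⟩ := hs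
  have hu := (h.add_int n).two_zpow_mul (-l)
  have ht : (2 : ℝ) ^ c * (s + 2 * π * n) = 2 ^ (c + l) * (2 ^ (-l) * (s + 2 * π * n)) := by
    rw [zpow_add₀ two_ne_zero, mul_assoc (2 ^ c : ℝ), two_zpow_mul_two_zpow_neg_mul]
  have hz : (2 : ℝ) ^ l * 2 ^ (-l) = 1 := by
    rw [mul_comm]
    exact zpow_neg_mul_zpow_self l two_ne_zero
  rw [h.sigma_two_zpow_mul hsE hsn c, ht, hu.sigma_two_zpow_mul huE hum (c + l),
    zpow_add₀ two_ne_zero]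
  linear_combination (2 ^ c * (s + 2 * π * n)) * hz

lemma add_two_zpow_mul_eq_zero (h : IsRegularOrbit E F σ s) {n k m l : ℤ}
    (hs : s ∈ EnkTest E F n k m l) (hid : σ (σ s) = s) : (n : ℝ) + 2 ^ l * m = 0 := by
  have h2 := h.sigma_sigma_two_zpow_mul hs 0
  rw [zpow_zero, one_mul, one_mul, hid] at h2
  have : 2 * π * ((n : ℝ) + 2 ^ l * m) = 0 := by linarith
  simpa [Real.pi_ne_zero] using this

lemma sigma_sigma_eq_self (h : IsRegularOrbit E F σ s)
    (hC : ∀ n k m l : ℤ, n ≠ 0 → k ≠ 0 → m ≠ 0 → l ≠ 0 →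
      0 < volume (EnkTest E F n k m l) → (n : ℝ) + 2 ^ l * m = 0) :
    σ (σ s) = s := by
  obtain ⟨j, hj⟩ := h.isRegularPoint.tiling_E.exists_two_zpow_neg_mul_mem
  have hx := h.two_zpow_mul (-j)
  obtain ⟨n, hn, -⟩ := hx.isRegularPoint.tiling_F.translate
  obtain ⟨k, hk, -⟩ := hx.isRegularPoint.tiling_F.dilate
  obtain ⟨l, hl⟩ := (hx.add_int n).isRegularPoint.tiling_E.exists_two_zpow_neg_mul_mem
  have hu := (hx.add_int n).two_zpow_mul (-l)
  obtain ⟨m, hm, -⟩ := hu.isRegularPoint.tiling_F.translate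
  have hmem : 2 ^ (-j) * s ∈ EnkTest E F n k m l := by
    refine ⟨⟨⟨hj, hn⟩, hk⟩, ⟨hl, hm⟩, ?_⟩
    rwa [mem_ofPred_eq, two_zpow_mul_two_zpow_neg_mul]
  have hnl := eq_zero_iff_of_mem_EnkTest hx.isRegularPoint.tiling_E hmem
  have hml := eq_zero_iff_of_mem_Enk hu.isRegularPoint.tiling_F hmem.2
  have hnm : (n : ℝ) + 2 ^ l * m = 0 := by
    by_cases hn0 : n = 0
    · simp [hn0, hml.2 (hnl.1 hn0)]
    · refine hC n k m l hn0 ?_ ?_ ?_ ?_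
      · exact fun hk0 => hn0 ((eq_zero_iff_of_mem_Enk hx.isRegularPoint.tiling_F hmem.1).2 hk0)
      · exact fun hm0 => hn0 (hnl.2 (hml.1 hm0))
      · exact fun hl0 => hn0 (hnl.2 hl0)
      · exact pos_iff_ne_zero.2 fun h0 => hx.isRegularPoint.notMem_of_null n k m l h0 hmem
  have h2 := hx.sigma_sigma_two_zpow_mul hmem j
  rwa [two_zpow_mul_two_zpow_neg_mul, hnm, mul_zero, add_zero, two_zpow_mul_two_zpow_neg_mul] at h2

end IsRegularOrbit

end Regular

/-- Theorem 3(i) of the paper.  `(E, F)` is an interpolation pair iff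
whenever `E_{n,k} ∩ (2^l E_{m,l} − 2nπ)` has positive measure for nonzero integers
`n, k, m, l`, one has `n + 2^l·m = 0`; furthermore for any such quadruple one also
has `k = −l`. -/
theorem stmt_6 (E F : Set ℝ) (hE : IsDyadicWaveletSet E) (hF : IsDyadicWaveletSet F)
    (σ : ℝ → ℝ) (hσ : IsInterpolationMap E F σ) :
    ((∀ᵐ s : ℝ ∂volume, σ (σ s) = s) ↔
      (∀ n k m l : ℤ, n ≠ 0 → k ≠ 0 → m ≠ 0 → l ≠ 0 →
        0 < volume (EnkTest E F n k m l) → (n : ℝ) + (2 : ℝ) ^ l * m = 0)) ∧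
    ((∀ᵐ s : ℝ ∂volume, σ (σ s) = s) →
      ∀ n k m l : ℤ, n ≠ 0 → k ≠ 0 → m ≠ 0 → l ≠ 0 →
        0 < volume (EnkTest E F n k m l) → k = -l) := by
  have hreg := hσ.ae_isRegularOrbit hE hF
  have hpoint : (∀ᵐ s, σ (σ s) = s) → ∀ n k m l : ℤ,
      0 < volume (EnkTest E F n k m l) → (n : ℝ) + 2 ^ l * m = 0 ∧ k = -l := by
    intro hid n k m l hpos
    obtain ⟨s, hs, hsreg, hids⟩ :=
      Measure.exists_mem_of_measure_ne_zero_of_ae hpos.ne' (ae_restrict_of_ae (hreg.and hid))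
    have hnm := hsreg.add_two_zpow_mul_eq_zero hs hids
    exact ⟨hnm, eq_neg_of_mem_EnkTest hsreg.isRegularPoint.tiling_F hs hnm⟩
  refine ⟨⟨fun hid n k m l _ _ _ _ hpos => (hpoint hid n k m l hpos).1,
    fun hC => hreg.mono fun _ hs => hs.sigma_sigma_eq_self hC⟩, ?_⟩
  exact fun hid n k m l _ _ _ _ hpos => (hpoint hid n k m l hpos).2
end
end

section
/- For each integer n ≥ 1, let G_n = [((2^n−1)/2^n)π, ((2^{n+1}−1)/2^{n+1})π) + (2^{n+2}−2)π, and let F₀ = [π, 2π) ∖ ⋃_{n≥1} 2^{-(n+1)} G_n. Then there exists a measurable set G₀ ⊆ ([0, π/2) + 2π) ∪ (1/4)F₀ that is 2π-translation congruent to [0, π/2) and 2-dilation congruent to F₀, and for any such G₀ the set W = (−⋃_{n≥0} G_n) ∪ (⋃_{n≥0} G_n) is a dyadic wavelet set satisfying W = −W; in particular there exists an unbounded symmetric dyadic wavelet set (for every M > 0 the set W ∖ [−M, M] has positive Lebesgue measure). -/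
open MeasureTheory Set
open scoped Real symmDiff

noncomputable section

/-- `G_n = [((2^n−1)/2^n)π, ((2^{n+1}−1)/2^{n+1})π) + (2^{n+2}−2)π`, for `n ≥ 1`. -/
def Gpiece (n : ℕ) : Set ℝ :=
  Ico ((((2 : ℝ) ^ n - 1) / (2 : ℝ) ^ n) * π + ((2 : ℝ) ^ (n + 2) - 2) * π)
     ((((2 : ℝ) ^ (n + 1) - 1) / (2 : ℝ) ^ (n + 1)) * π + ((2 : ℝ) ^ (n + 2) - 2) * π)

/-- `F₀ = [π, 2π) ∖ ⋃_{n ≥ 1} 2^{−(n+1)} G_n`. -/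
def Fzero : Set ℝ :=
  Ico π (2 * π) \ ⋃ n : ℕ, (fun x => ((2 : ℝ) ^ ((n : ℕ) + 2))⁻¹ * x) '' Gpiece (n + 1)

/-- The properties required of the piece `G₀`: it is a measurable subset of
`([0, π/2) + 2π) ∪ (1/4)F₀` that is `2π`-translation congruent to `[0, π/2)` and
`2`-dilation congruent to `F₀`. -/
def GoodGzero (G₀ : Set ℝ) : Prop :=
  MeasurableSet G₀ ∧
  G₀ ⊆ ((fun x => x + 2 * π) '' Ico 0 (π / 2)) ∪ ((fun x => (4 : ℝ)⁻¹ * x) '' Fzero) ∧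
  TransCongruent G₀ (Ico 0 (π / 2)) ∧
  DilCongruent G₀ Fzero

/-!
Let `ℤ` act on `ℝ` by quasi-measure-preserving maps `f n` (the translations `x ↦ x + 2πn` or the
dilations `x ↦ 2ⁿx`), and count how many points of the orbit of `x` lie in a set `A`. A
congruence of `A` with `B` (pieces of `A` moved along the action) preserves this count almost
everywhere, and the count adds over almost disjoint unions. `W` is a dyadic wavelet set exactly
when both counts equal `1` almost everywhere, as they do for `[-π, π)` and for `±[π, 2π)`.

Put `E = G₀ ∪ ⋃ G_n`. Translating `G_n` by `-(2^{n+2} - 2)π` gives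
`[(1 - 2^{-n})π, (1 - 2^{-n-1})π)`, and these tile `[π/2, π)`, so `E` has the translation count
of `[0, π/2) ∪ [π/2, π) = [0, π)`. Dilating `G_n` by `2^{-(n+1)}` gives the pieces removed from
`[π, 2π)` to form `F₀`, so `E` has the dilation count of `[π, 2π)`. As `E > 0`, `W = -E ∪ E` has
the counts of `[-π, π)` and `±[π, 2π)`. The `G_n` run off to infinity, so `W` is unbounded.

For `G₀` take `([0, π/2) \ Q) ∪ (Q + 2π)`, where `Q` is the least solution of
`Q = [0, π/4) ∪ U/4 ∪ (π/4 + Q/8)` and `U = ⋃ 2^{-(n+1)} G_n`. This equation says exactly that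
`4 ([0, π/2) \ Q)` and `(Q + 2π)/2 = π + Q/2` tile `F₀`.
-/

open Filter Topology Function
open scoped ENNReal

theorem IsAEPartition.indicator_ae_eq_tsum {ι : Type*} [Countable ι] {P : ι → Set ℝ} {A : Set ℝ}
    (h : IsAEPartition P A) : ∀ᵐ y, A.indicator (1 : ℝ → ℝ≥0∞) y = ∑' i, (P i).indicator 1 y := by
  obtain ⟨hcover, hdisj⟩ := h
  have hP : ∀ᵐ y, ∀ i j, i ≠ j → y ∈ P i → y ∉ P j := by
    refine ae_all_iff.2 fun i => ae_all_iff.2 fun j => ?_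
    by_cases hij : i = j
    · exact Eventually.of_forall fun _ h => absurd hij h
    · filter_upwards [measure_eq_zero_iff_ae_notMem.1 (hdisj i j hij)] with y hy _ hi hj
      exact hy ⟨hi, hj⟩
  filter_upwards [(measure_symmDiff_eq_zero_iff.1 hcover).mem_iff, hP] with y hyA hyP
  by_cases hy : y ∈ A
  · obtain ⟨i, hi⟩ := mem_iUnion.1 (hyA.1 hy)
    rw [indicator_of_mem hy, tsum_eq_single i fun j hj => indicator_of_notMem (hyP i j hj.symm hi) _,
      indicator_of_mem hi]
  · rw [indicator_of_notMem hy, eq_comm, ENNReal.tsum_eq_zero]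
    exact fun i => indicator_of_notMem (fun hi => hy (hyA.2 (mem_iUnion.2 ⟨i, hi⟩))) _

theorem isAEPartition_of_pairwise_disjoint {ι : Type*} {P : ι → Set ℝ} {A : Set ℝ}
    (hd : Pairwise (Disjoint on P)) (hA : ⋃ i, P i = A) : IsAEPartition P A :=
  ⟨by simp [hA], fun _ _ hij => by simp [(hd hij).inter_eq]⟩

section OrbitCount

def orbitCount (f : ℤ → ℝ → ℝ) (A : Set ℝ) (x : ℝ) : ℝ≥0∞ := ∑' n, A.indicator 1 (f n x)

variable {f : ℤ → ℝ → ℝ} {A B A' B' : Set ℝ}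

theorem orbitCount_eq_one_iff {x : ℝ} : orbitCount f A x = 1 ↔ ∃! n, f n x ∈ A := by
  have hsum : orbitCount f A x = {n | f n x ∈ A}.encard := by
    rw [← ENNReal.tsum_set_one, tsum_subtype _ (fun _ => (1 : ℝ≥0∞))]
    rfl
  rw [hsum, ← ENat.toENNReal_one, ENat.toENNReal_inj, Set.encard_eq_one]
  simp only [ExistsUnique, Set.eq_singleton_iff_unique_mem, Set.mem_ofPred_eq]

theorem orbitCount_union_add_inter (x : ℝ) :
    orbitCount f (A ∪ B) x + orbitCount f (A ∩ B) x = orbitCount f A x + orbitCount f B x := by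
  simp only [orbitCount, ← ENNReal.tsum_add, Set.indicator_union_add_inter_apply]

theorem orbitCount_neg (σ : ℤ ≃ ℤ) (hσ : ∀ n x, -f n x = f (σ n) (-x)) (x : ℝ) :
    orbitCount f (-A) x = orbitCount f A (-x) := by
  unfold orbitCount
  rw [← σ.tsum_eq (fun m => A.indicator 1 (f m (-x)))]
  refine tsum_congr fun n => ?_
  classical
  simp only [Set.indicator_apply, Set.mem_neg, hσ, Pi.one_apply]

theorem mem_image_iff_of_add (hadd : ∀ m n x, f m (f n x) = f (m + n) x) (hzero : ∀ x, f 0 x = x)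
    {k : ℤ} {P : Set ℝ} {y : ℝ} : y ∈ f k '' P ↔ f (-k) y ∈ P := by
  rw [image_eq_preimage_of_inverse (g := f (-k)) (fun x => by simp [hadd, hzero])
    (fun x => by simp [hadd, hzero]), mem_preimage]

theorem orbitCount_image (hadd : ∀ m n x, f m (f n x) = f (m + n) x) (hzero : ∀ x, f 0 x = x)
    (k : ℤ) (P : Set ℝ) (x : ℝ) : orbitCount f (f k '' P) x = orbitCount f P x := by
  unfold orbitCount
  rw [← (Equiv.addLeft k).tsum_eq]
  refine tsum_congr fun n => ?_
  classical
  simp only [Set.indicator_apply, Equiv.coe_addLeft, mem_image_iff_of_add hadd hzero, hadd,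
    neg_add_cancel_left, Pi.one_apply]

section QuasiInvariant

variable (hf : ∀ n, Measure.QuasiMeasurePreserving (f n) volume volume)
include hf

theorem ae_forall_orbit {p : ℝ → Prop} (h : ∀ᵐ y, p y) : ∀ᵐ x, ∀ n, p (f n x) :=
  ae_all_iff.2 fun n => (hf n).ae h

theorem orbitCount_ae_eq_of_ae_eq (h : A =ᵐ[volume] B) :
    orbitCount f A =ᵐ[volume] orbitCount f B := by
  filter_upwards [ae_forall_orbit hf (indicator_ae_eq_of_ae_eq_set (f := (1 : ℝ → ℝ≥0∞)) h)]
    with x hx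
  exact tsum_congr hx

theorem orbitCount_union_ae_eq (h : volume (A ∩ B) = 0) :
    orbitCount f (A ∪ B) =ᵐ[volume] orbitCount f A + orbitCount f B := by
  filter_upwards [orbitCount_ae_eq_of_ae_eq hf (ae_eq_empty.2 h)] with x hx
  rw [Pi.add_apply, ← orbitCount_union_add_inter, hx]
  simp [orbitCount]

theorem orbitCount_union_ae_eq_union (hA : orbitCount f A =ᵐ[volume] orbitCount f B)
    (hA' : orbitCount f A' =ᵐ[volume] orbitCount f B') (hAA' : volume (A ∩ A') = 0)
    (hBB' : volume (B ∩ B') = 0) : orbitCount f (A ∪ A') =ᵐ[volume] orbitCount f (B ∪ B') := by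
  filter_upwards [orbitCount_union_ae_eq hf hAA', orbitCount_union_ae_eq hf hBB', hA, hA']
    with x h₁ h₂ h₃ h₄
  simp only [h₁, h₂, Pi.add_apply, h₃, h₄]

theorem orbitCount_ae_eq_tsum {ι : Type*} [Countable ι] {P : ι → Set ℝ} (h : IsAEPartition P A) :
    ∀ᵐ x, orbitCount f A x = ∑' i, orbitCount f (P i) x := by
  filter_upwards [ae_forall_orbit hf h.indicator_ae_eq_tsum] with x hx
  simp only [orbitCount, hx]
  exact ENNReal.tsum_comm

theorem orbitCount_ae_eq_of_isAEPartition (hadd : ∀ m n x, f m (f n x) = f (m + n) x)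
    (hzero : ∀ x, f 0 x = x) {ι : Type*} [Countable ι] (c : ι → ℤ) {P : ι → Set ℝ}
    (hA : IsAEPartition P A) (hB : IsAEPartition (fun i => f (c i) '' P i) B) :
    orbitCount f A =ᵐ[volume] orbitCount f B := by
  filter_upwards [orbitCount_ae_eq_tsum hf hA, orbitCount_ae_eq_tsum hf hB] with x hxA hxB
  simp only [hxA, hxB, orbitCount_image hadd hzero]

end QuasiInvariant

theorem orbitCount_neg_ae_eq (σ : ℤ ≃ ℤ) (hσ : ∀ n x, -f n x = f (σ n) (-x))
    (h : orbitCount f A =ᵐ[volume] orbitCount f B) :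
    orbitCount f (-A) =ᵐ[volume] orbitCount f (-B) := by
  filter_upwards [(Measure.measurePreserving_neg volume).quasiMeasurePreserving.ae h] with x hx
  rw [orbitCount_neg σ hσ, orbitCount_neg σ hσ, hx]

end OrbitCount

def CongruentVia (f : ℤ → ℝ → ℝ) (A B : Set ℝ) : Prop :=
  ∃ P : ℤ → Set ℝ, (∀ n, MeasurableSet (P n)) ∧ IsAEPartition P A ∧
    IsAEPartition (fun n => f n '' P n) B

theorem CongruentVia.orbitCount_ae_eq {f : ℤ → ℝ → ℝ} {A B : Set ℝ}
    (hf : ∀ n, Measure.QuasiMeasurePreserving (f n) volume volume)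
    (hadd : ∀ m n x, f m (f n x) = f (m + n) x) (hzero : ∀ x, f 0 x = x)
    (h : CongruentVia f A B) : orbitCount f A =ᵐ[volume] orbitCount f B :=
  let ⟨_, _, hA, hB⟩ := h
  orbitCount_ae_eq_of_isAEPartition hf hadd hzero id hA hB

theorem congruentVia_union_image (f : ℤ → ℝ → ℝ) {a b : ℤ} (hab : a ≠ b) {S T : Set ℝ}
    (hS : MeasurableSet S) (hT : MeasurableSet T) (hST : Disjoint S T)
    (hST' : Disjoint (f a '' S) (f b '' T)) : CongruentVia f (S ∪ T) (f a '' S ∪ f b '' T) := by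
  have hpair : ∀ {U V : Set ℝ}, Disjoint U V →
      IsAEPartition (fun n => if n = a then U else if n = b then V else ∅) (U ∪ V) := by
    intro U V hUV
    refine isAEPartition_of_pairwise_disjoint (fun i j hij => ?_) ?_
    · simp only [Function.onFun]
      split_ifs <;> simp_all [hUV.symm]
    · ext x
      simp only [mem_iUnion, mem_union]
      constructor
      · rintro ⟨n, hn⟩
        split_ifs at hn <;> simp_all
      · rintro (hx | hx)
        · exact ⟨a, by simpa using hx⟩
        · exact ⟨b, by simpa [hab.symm] using hx⟩
  refine ⟨_, fun n => ?_, hpair hST, ?_⟩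
  · split_ifs <;> simp [hS, hT]
  · convert hpair hST' using 2 with n
    split_ifs <;> simp_all

def transl (n : ℤ) (x : ℝ) : ℝ := x + 2 * π * n

def dilate (n : ℤ) (x : ℝ) : ℝ := 2 ^ n * x

theorem transl_transl (m n : ℤ) (x : ℝ) : transl m (transl n x) = transl (m + n) x := by
  simp only [transl]
  push_cast
  ring

theorem transl_zero (x : ℝ) : transl 0 x = x := by simp [transl]

theorem neg_transl (n : ℤ) (x : ℝ) : -transl n x = transl (Equiv.neg ℤ n) (-x) := by
  simp only [transl, Equiv.neg_apply, Int.cast_neg]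
  ring

theorem quasiMeasurePreserving_transl (n : ℤ) :
    Measure.QuasiMeasurePreserving (transl n) volume volume :=
  (measurePreserving_add_right volume _).quasiMeasurePreserving

theorem dilate_dilate (m n : ℤ) (x : ℝ) : dilate m (dilate n x) = dilate (m + n) x := by
  simp only [dilate, zpow_add₀ (two_ne_zero' ℝ), mul_assoc]

theorem dilate_zero (x : ℝ) : dilate 0 x = x := by simp [dilate]

theorem neg_dilate (n : ℤ) (x : ℝ) : -dilate n x = dilate (Equiv.refl ℤ n) (-x) := by
  simp [dilate]

theorem quasiMeasurePreserving_dilate (n : ℤ) :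
    Measure.QuasiMeasurePreserving (dilate n) volume volume :=
  Measure.quasiMeasurePreserving_smul volume (zpow_ne_zero n two_ne_zero)

theorem orbitCount_transl_Ico (a x : ℝ) : orbitCount transl (Ico a (a + 2 * π)) x = 1 :=
  orbitCount_eq_one_iff.2 <| by
    simpa [transl, zsmul_eq_mul, mul_comm] using existsUnique_add_zsmul_mem_Ico Real.two_pi_pos x a

theorem existsUnique_two_zpow_mul_mem_Ico {y : ℝ} (hy : 0 < y) :
    ∃! n : ℤ, (2 : ℝ) ^ n * y ∈ Ico π (2 * π) := by
  have key : ∀ n : ℤ, (2 : ℝ) ^ n * y ∈ Ico π (2 * π) ↔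
      (2 : ℝ) ^ (-n) ≤ y / π ∧ y / π < 2 ^ (-n + 1) := by
    intro n
    rw [mem_Ico, zpow_add_one₀ (two_ne_zero' ℝ), zpow_neg, le_div_iff₀ Real.pi_pos,
      div_lt_iff₀ Real.pi_pos, mul_assoc, inv_mul_le_iff₀ (zpow_pos two_pos n),
      lt_inv_mul_iff₀ (zpow_pos two_pos n)]
  have unique : ∀ k j : ℤ, (2 : ℝ) ^ k ≤ y / π → y / π < 2 ^ (k + 1) →
      (2 : ℝ) ^ j ≤ y / π → y / π < 2 ^ (j + 1) → k = j := by
    intro k j h₁ h₂ h₃ h₄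
    have := (zpow_lt_zpow_iff_right₀ one_lt_two).1 (h₁.trans_lt h₄)
    have := (zpow_lt_zpow_iff_right₀ one_lt_two).1 (h₃.trans_lt h₂)
    omega
  obtain ⟨k, hk₁, hk₂⟩ := exists_mem_Ico_zpow (div_pos hy Real.pi_pos) one_lt_two
  refine ⟨-k, (key _).2 ⟨by simpa using hk₁, by simpa using hk₂⟩, fun n hn => ?_⟩
  obtain ⟨h₁, h₂⟩ := (key n).1 hn
  have := unique _ _ h₁ h₂ hk₁ hk₂
  omega

theorem mem_neg_union_iff_abs_mem {S : Set ℝ} (hS : S ⊆ Ioi 0) {y : ℝ} :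
    y ∈ -S ∪ S ↔ |y| ∈ S := by
  rcases le_or_gt 0 y with hy | hy
  · rw [abs_of_nonneg hy, mem_union, Set.mem_neg, or_iff_right]
    exact fun h => (hS h).out.not_ge (neg_nonpos.2 hy)
  · rw [abs_of_neg hy, mem_union, Set.mem_neg, or_iff_left]
    exact fun h => (hS h).out.not_gt hy

theorem orbitCount_dilate_neg_union_Ico {x : ℝ} (hx : x ≠ 0) :
    orbitCount dilate (-Ico π (2 * π) ∪ Ico π (2 * π)) x = 1 := by
  have hS : Ico π (2 * π) ⊆ Ioi 0 := fun y hy => Real.pi_pos.trans_le hy.1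
  refine orbitCount_eq_one_iff.2 ?_
  simpa only [dilate, mem_neg_union_iff_abs_mem hS, abs_mul, abs_zpow, abs_two]
    using existsUnique_two_zpow_mul_mem_Ico (abs_pos.2 hx)

theorem volume_neg_inter_self {S : Set ℝ} (hS : S ⊆ Ici 0) : volume (-S ∩ S) = 0 := by
  refine measure_mono_null (fun y hy => ?_) (measure_singleton 0)
  have := hS hy.1
  have := hS hy.2
  simp_all only [mem_Ici, neg_nonneg, mem_singleton_iff]
  linarith

theorem isDyadicWaveletSet_neg_union {E : Set ℝ} (hE : MeasurableSet E) (hpos : E ⊆ Ici 0)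
    (htr : orbitCount transl E =ᵐ[volume] orbitCount transl (Ico 0 π))
    (hdil : orbitCount dilate E =ᵐ[volume] orbitCount dilate (Ico π (2 * π))) :
    IsDyadicWaveletSet (-E ∪ E) := by
  refine ⟨hE.neg.union hE, ?_, ?_⟩
  · have hsymm : (-Ico 0 π ∪ Ico 0 π : Set ℝ) =ᵐ[volume] Ico (-π) (-π + 2 * π) := by
      rw [Set.neg_Ico, neg_zero, Ioc_union_Ico_eq_Ioo (neg_lt_zero.2 Real.pi_pos) Real.pi_pos,
        show -π + 2 * π = π by ring]
      exact Ioo_ae_eq_Ico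
    filter_upwards [orbitCount_union_ae_eq_union quasiMeasurePreserving_transl
        (orbitCount_neg_ae_eq _ neg_transl htr) htr (volume_neg_inter_self hpos)
        (volume_neg_inter_self Ico_subset_Ici_self),
      orbitCount_ae_eq_of_ae_eq quasiMeasurePreserving_transl hsymm] with x h₁ h₂
    exact (orbitCount_eq_one_iff (f := transl)).1 (by rw [h₁, h₂, orbitCount_transl_Ico])
  · filter_upwards [orbitCount_union_ae_eq_union quasiMeasurePreserving_dilate
        (orbitCount_neg_ae_eq _ neg_dilate hdil) hdil (volume_neg_inter_self hpos)
        (volume_neg_inter_self fun y hy => Real.pi_pos.le.trans hy.1),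
      Measure.ae_ne volume 0] with x h₁ hx
    exact (orbitCount_eq_one_iff (f := dilate)).1 (by rw [h₁, orbitCount_dilate_neg_union_Ico hx])

theorem iUnion_Ico_succ_eq_Ico {α : Type*} [LinearOrder α] [TopologicalSpace α]
    [OrderTopology α] {a : ℕ → α} (ha : Monotone a) {L : α}
    (hL : Tendsto a atTop (𝓝 L)) : ⋃ n, Ico (a n) (a (n + 1)) = Ico (a 0) L := by
  refine Subset.antisymm (iUnion_subset fun n x hx =>
    ⟨(ha n.zero_le).trans hx.1, hx.2.trans_le (ha.ge_of_tendsto hL _)⟩) ?_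
  rintro x ⟨h₀, hxL⟩
  classical
  have hex : ∃ n, x < a n := (hL.eventually (lt_mem_nhds hxL)).exists
  have hfind := Nat.find_spec hex
  obtain ⟨k, hk⟩ : ∃ k, Nat.find hex = k + 1 :=
    Nat.exists_eq_add_one.2 (Nat.pos_of_ne_zero fun h => (h ▸ hfind).not_ge h₀)
  rw [hk] at hfind
  exact mem_iUnion.2 ⟨k, not_lt.1 (Nat.find_min hex (by omega)), hfind⟩

def dyadicPi (n : ℕ) : ℝ := π - π / 2 ^ (n + 1)

def pieceOffset (n : ℕ) : ℝ := (2 ^ (n + 3) - 2) * π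

def Gdilates : Set ℝ := ⋃ n : ℕ, (fun x => ((2 : ℝ) ^ ((n : ℕ) + 2))⁻¹ * x) '' Gpiece (n + 1)

theorem Fzero_eq : Fzero = Ico π (2 * π) \ Gdilates := rfl

theorem Gpiece_succ (n : ℕ) :
    Gpiece (n + 1) = Ico (pieceOffset n + dyadicPi n) (pieceOffset n + dyadicPi (n + 1)) := by
  unfold Gpiece pieceOffset dyadicPi
  congr 1 <;> field_simp <;> ring

theorem strictMono_dyadicPi : StrictMono dyadicPi :=
  strictMono_nat_of_lt_succ fun n => by
    unfold dyadicPi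
    gcongr
    · exact one_lt_two
    · omega

theorem monotone_dyadicPi : Monotone dyadicPi := strictMono_dyadicPi.monotone

theorem dyadicPi_lt_pi (n : ℕ) : dyadicPi n < π := by
  unfold dyadicPi
  have := Real.pi_pos
  have : 0 < π / 2 ^ (n + 1) := by positivity
  linarith

theorem pi_div_two_le_dyadicPi (n : ℕ) : π / 2 ≤ dyadicPi n := by
  calc π / 2 = dyadicPi 0 := by unfold dyadicPi; ring
    _ ≤ dyadicPi n := monotone_dyadicPi n.zero_le

theorem tendsto_dyadicPi : Tendsto dyadicPi atTop (𝓝 π) := by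
  have : Tendsto (fun n : ℕ => π / 2 ^ (n + 1)) atTop (𝓝 0) :=
    tendsto_const_nhds.div_atTop ((tendsto_pow_atTop_atTop_of_one_lt one_lt_two).comp
      (tendsto_add_atTop_nat 1))
  have h := (tendsto_const_nhds (x := π)).sub this
  rw [sub_zero] at h
  exact h

theorem pieceOffset_add_pi_le (n : ℕ) : pieceOffset n + π ≤ pieceOffset (n + 1) := by
  unfold pieceOffset
  have := Real.pi_pos
  have : (1 : ℝ) ≤ 2 ^ (n + 3) := one_le_pow₀ one_le_two
  rw [show (2 : ℝ) ^ (n + 1 + 3) = 2 * 2 ^ (n + 3) by ring]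
  nlinarith

theorem monotone_pieceOffset : Monotone pieceOffset :=
  monotone_nat_of_le_succ fun n => by linarith [pieceOffset_add_pi_le n, Real.pi_pos]

theorem Gpiece_succ_subset (n : ℕ) : Gpiece (n + 1) ⊆ Ico (pieceOffset n) (pieceOffset n + π) := by
  rw [Gpiece_succ]
  exact Ico_subset_Ico (by linarith [pi_div_two_le_dyadicPi n, Real.pi_pos])
    (by linarith [dyadicPi_lt_pi (n + 1)])

theorem pairwise_disjoint_Gpiece : Pairwise (Disjoint on fun n => Gpiece (n + 1)) :=
  fun i j hij => (monotone_pieceOffset.pairwise_disjoint_on_Ico_succ hij).mono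
    ((Gpiece_succ_subset i).trans (Ico_subset_Ico_right (pieceOffset_add_pi_le i)))
    ((Gpiece_succ_subset j).trans (Ico_subset_Ico_right (pieceOffset_add_pi_le j)))

theorem transl_image_Gpiece (n : ℕ) :
    transl (1 - 2 ^ (n + 2)) '' Gpiece (n + 1) = Ico (dyadicPi n) (dyadicPi (n + 1)) := by
  have h : pieceOffset n + 2 * π * ((1 - 2 ^ (n + 2) : ℤ) : ℝ) = 0 := by
    unfold pieceOffset
    push_cast
    ring
  rw [Gpiece_succ, show transl (1 - 2 ^ (n + 2)) = (· + 2 * π * ((1 - 2 ^ (n + 2) : ℤ) : ℝ)) from rfl,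
    image_add_const_Ico]
  congr 1 <;> linarith

theorem orbitCount_transl_iUnion_Gpiece :
    orbitCount transl (⋃ n, Gpiece (n + 1)) =ᵐ[volume] orbitCount transl (Ico (π / 2) π) := by
  refine orbitCount_ae_eq_of_isAEPartition quasiMeasurePreserving_transl transl_transl transl_zero
    (fun n : ℕ => 1 - 2 ^ (n + 2)) (isAEPartition_of_pairwise_disjoint pairwise_disjoint_Gpiece rfl)
    ?_
  simp only [transl_image_Gpiece]
  refine isAEPartition_of_pairwise_disjoint monotone_dyadicPi.pairwise_disjoint_on_Ico_succ ?_
  rw [iUnion_Ico_succ_eq_Ico monotone_dyadicPi tendsto_dyadicPi]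
  congr 1
  unfold dyadicPi
  ring

theorem image_Gpiece_subset_Ico (n : ℕ) :
    (fun x => ((2 : ℝ) ^ (n + 2))⁻¹ * x) '' Gpiece (n + 1) ⊆
      Ico (π + dyadicPi n) (π + dyadicPi (n + 1)) := by
  refine (image_mono (Gpiece_succ_subset n)).trans ?_
  rw [image_mul_left_Ico (by positivity)]
  unfold pieceOffset dyadicPi
  apply le_of_eq
  congr 1 <;> field_simp <;> ring

theorem pairwise_disjoint_image_Gpiece :
    Pairwise (Disjoint on fun n : ℕ => (fun x => ((2 : ℝ) ^ (n + 2))⁻¹ * x) '' Gpiece (n + 1)) :=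
  fun i j hij => ((monotone_dyadicPi.const_add π).pairwise_disjoint_on_Ico_succ hij).mono
    (image_Gpiece_subset_Ico i) (image_Gpiece_subset_Ico j)

theorem Gdilates_subset : Gdilates ⊆ Ico (π + π / 2) (2 * π) :=
  iUnion_subset fun n => (image_Gpiece_subset_Ico n).trans <|
    Ico_subset_Ico (by linarith [pi_div_two_le_dyadicPi n])
      (by linarith [dyadicPi_lt_pi (n + 1)])

theorem dilate_image_Gpiece (n : ℕ) :
    dilate (-((n : ℤ) + 2)) '' Gpiece (n + 1) =
      (fun x => ((2 : ℝ) ^ (n + 2))⁻¹ * x) '' Gpiece (n + 1) := by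
  have h : (2 : ℝ) ^ (-((n : ℤ) + 2)) = ((2 : ℝ) ^ (n + 2))⁻¹ := by
    rw [zpow_neg]
    norm_cast
  change (fun x => (2 : ℝ) ^ (-((n : ℤ) + 2)) * x) '' _ = _
  rw [h]

theorem orbitCount_dilate_iUnion_Gpiece :
    orbitCount dilate (⋃ n, Gpiece (n + 1)) =ᵐ[volume] orbitCount dilate Gdilates := by
  refine orbitCount_ae_eq_of_isAEPartition quasiMeasurePreserving_dilate dilate_dilate dilate_zero
    (fun n : ℕ => -((n : ℤ) + 2))
    (isAEPartition_of_pairwise_disjoint pairwise_disjoint_Gpiece rfl) ?_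
  simp only [dilate_image_Gpiece]
  exact isAEPartition_of_pairwise_disjoint pairwise_disjoint_image_Gpiece rfl

theorem two_pow_le_pieceOffset (n : ℕ) : 2 ^ n ≤ pieceOffset n := by
  unfold pieceOffset
  have : (1 : ℝ) ≤ 2 ^ n := one_le_pow₀ one_le_two
  rw [show (2 : ℝ) ^ (n + 3) = 8 * 2 ^ n by ring]
  nlinarith [Real.pi_gt_three]

theorem iUnion_Gpiece_subset : ⋃ n, Gpiece (n + 1) ⊆ Ici (6 * π) :=
  iUnion_subset fun n x hx => by
    have h₀ : pieceOffset 0 = 6 * π := by norm_num [pieceOffset]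
    exact h₀ ▸ (monotone_pieceOffset n.zero_le).trans (Gpiece_succ_subset n hx).1

theorem volume_diff_Icc_pos {E : Set ℝ} (hE : ⋃ n, Gpiece (n + 1) ⊆ E) (M : ℝ) :
    0 < volume (E \ Icc (-M) M) := by
  obtain ⟨n, hn⟩ := pow_unbounded_of_one_lt M one_lt_two
  have hsub : Gpiece (n + 1) ⊆ E \ Icc (-M) M := fun x hx =>
    ⟨hE (mem_iUnion_of_mem n hx), fun hM => hM.2.not_gt <|
      hn.trans_le ((two_pow_le_pieceOffset n).trans (Gpiece_succ_subset n hx).1)⟩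
  refine lt_of_lt_of_le ?_ (measure_mono hsub)
  rw [Gpiece_succ, Real.volume_Ico, ENNReal.ofReal_pos, sub_pos, add_lt_add_iff_left]
  exact strictMono_dyadicPi n.lt_succ_self

section Symmetrization

variable {G₀ : Set ℝ}

theorem GoodGzero.subset_Ico (hG : GoodGzero G₀) : G₀ ⊆ Ico 0 (3 * π) := by
  intro x hx
  have := Real.pi_pos
  rcases hG.2.1 hx with ⟨y, hy, rfl⟩ | ⟨y, hy, rfl⟩
  · exact ⟨by linarith [hy.1], by linarith [hy.2]⟩
  · obtain ⟨h₁, h₂⟩ := (Fzero_eq ▸ hy).1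
    exact ⟨by linarith, by linarith⟩

theorem GoodGzero.inter_iUnion_Gpiece (hG : GoodGzero G₀) : G₀ ∩ ⋃ n, Gpiece (n + 1) = ∅ :=
  eq_empty_of_forall_notMem fun x ⟨h₁, h₂⟩ => by
    linarith [(hG.subset_Ico h₁).2, mem_Ici.1 (iUnion_Gpiece_subset h₂), Real.pi_pos]

theorem GoodGzero.union_iUnion_Gpiece_subset (hG : GoodGzero G₀) :
    G₀ ∪ ⋃ n, Gpiece (n + 1) ⊆ Ici 0 :=
  union_subset (hG.subset_Ico.trans Ico_subset_Ici_self)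
    (iUnion_Gpiece_subset.trans (Ici_subset_Ici.2 (by positivity)))

theorem GoodGzero.orbitCount_transl (hG : GoodGzero G₀) :
    orbitCount transl (G₀ ∪ ⋃ n, Gpiece (n + 1)) =ᵐ[volume] orbitCount transl (Ico 0 π) := by
  have h := orbitCount_union_ae_eq_union quasiMeasurePreserving_transl
    (CongruentVia.orbitCount_ae_eq quasiMeasurePreserving_transl transl_transl transl_zero hG.2.2.1)
    orbitCount_transl_iUnion_Gpiece (by simp [hG.inter_iUnion_Gpiece])
    (by simp [Ico_disjoint_Ico_same.inter_eq])
  rwa [Ico_union_Ico_eq_Ico (by positivity) (by linarith [Real.pi_pos])] at h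

theorem GoodGzero.orbitCount_dilate (hG : GoodGzero G₀) :
    orbitCount dilate (G₀ ∪ ⋃ n, Gpiece (n + 1)) =ᵐ[volume] orbitCount dilate (Ico π (2 * π)) := by
  have h := orbitCount_union_ae_eq_union quasiMeasurePreserving_dilate
    (CongruentVia.orbitCount_ae_eq quasiMeasurePreserving_dilate dilate_dilate dilate_zero hG.2.2.2)
    orbitCount_dilate_iUnion_Gpiece (by simp [hG.inter_iUnion_Gpiece])
    (by simp [Fzero_eq])
  rwa [Fzero_eq, sdiff_union_of_subset
    (Gdilates_subset.trans (Ico_subset_Ico_left (by linarith [Real.pi_pos])))] at h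

end Symmetrization

theorem iUnion_preimage_iterate_eq {α : Type*} (g : α → α) (s : Set α) :
    ⋃ k, g^[k] ⁻¹' s = s ∪ g ⁻¹' ⋃ k, g^[k] ⁻¹' s := by
  ext x
  simp only [mem_iUnion, mem_union, mem_preimage]
  constructor
  · rintro ⟨_ | k, hk⟩
    · exact Or.inl hk
    · exact Or.inr ⟨k, by rwa [iterate_succ_apply] at hk⟩
  · rintro (h | ⟨k, hk⟩)
    · exact ⟨0, h⟩
    · exact ⟨k + 1, by rwa [iterate_succ_apply]⟩

def zoom (x : ℝ) : ℝ := 8 * (x - π / 4)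

-- `zoom` inverts `q ↦ π/4 + q/8`, so this is the least `Q` with `Q = [0, π/4) ∪ U/4 ∪ (π/4 + Q/8)`.
def transferSet : Set ℝ := ⋃ k, zoom^[k] ⁻¹' (Ico 0 (π / 4) ∪ (4 * ·) ⁻¹' Gdilates)

theorem mem_transferSet_iff {x : ℝ} :
    x ∈ transferSet ↔ (0 ≤ x ∧ x < π / 4) ∨ 4 * x ∈ Gdilates ∨ zoom x ∈ transferSet := by
  have h := iUnion_preimage_iterate_eq zoom (Ico 0 (π / 4) ∪ (4 * ·) ⁻¹' Gdilates)
  rw [← transferSet] at h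
  conv_lhs => rw [h]
  simp only [mem_union, mem_Ico, mem_preimage, or_assoc]

theorem measurableSet_Gdilates : MeasurableSet Gdilates :=
  MeasurableSet.iUnion fun n => by
    rw [Gpiece_succ, image_mul_left_Ico (by positivity)]
    exact measurableSet_Ico

theorem measurableSet_transferSet : MeasurableSet transferSet :=
  MeasurableSet.iUnion fun k =>
    (measurableSet_Ico.union (measurableSet_Gdilates.preimage (measurable_const_mul 4))).preimage
      (((measurable_id.sub_const _).const_mul 8).iterate k)

theorem transferSet_subset : transferSet ⊆ Ico 0 (π / 2) := by
  have := Real.pi_pos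
  have key : ∀ k x, zoom^[k] x ∈ Ico 0 (π / 4) ∪ (4 * ·) ⁻¹' Gdilates → x ∈ Ico 0 (π / 2) := by
    intro k
    induction k with
    | zero =>
      rintro x (⟨h₁, h₂⟩ | h)
      · exact ⟨h₁, by simp only [iterate_zero_apply] at h₂; linarith⟩
      · obtain ⟨h₁, h₂⟩ : 4 * x ∈ Ico (π + π / 2) (2 * π) := Gdilates_subset h
        exact ⟨by linarith, by linarith⟩
    | succ k ih =>
      intro x hx
      rw [iterate_succ_apply] at hx
      obtain ⟨h₁, h₂⟩ := ih _ hx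
      simp only [zoom] at h₁ h₂
      exact ⟨by linarith, by linarith⟩
  intro x hx
  obtain ⟨k, hk⟩ := mem_iUnion.1 hx
  exact key k x hk

def lowerPiece : Set ℝ := Ico 0 (π / 2) \ transferSet

def upperPiece : Set ℝ := (· - 2 * π) ⁻¹' transferSet

theorem measurableSet_lowerPiece : MeasurableSet lowerPiece :=
  measurableSet_Ico.diff measurableSet_transferSet

theorem measurableSet_upperPiece : MeasurableSet upperPiece :=
  measurableSet_transferSet.preimage (measurable_id.sub_const _)

theorem disjoint_lowerPiece_upperPiece : Disjoint lowerPiece upperPiece :=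
  disjoint_left.2 fun y h₁ h₂ => by
    have := (transferSet_subset h₂).1
    linarith [h₁.1.2, Real.pi_pos]

theorem transl_image_upperPiece : transl (-1) '' upperPiece = transferSet := by
  ext y
  rw [mem_image_iff_of_add transl_transl transl_zero, upperPiece, mem_preimage]
  simp [transl]

theorem transl_image_pieces :
    transl 0 '' lowerPiece ∪ transl (-1) '' upperPiece = Ico 0 (π / 2) := by
  rw [funext transl_zero, image_id', transl_image_upperPiece, lowerPiece,
    sdiff_union_of_subset transferSet_subset]

theorem mem_dilate_image_lowerPiece {y : ℝ} : y ∈ dilate 2 '' lowerPiece ↔ y / 4 ∈ lowerPiece := by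
  rw [mem_image_iff_of_add dilate_dilate dilate_zero]
  norm_num [dilate, div_eq_inv_mul]

theorem mem_dilate_image_upperPiece {y : ℝ} :
    y ∈ dilate (-1) '' upperPiece ↔ zoom (y / 4) ∈ transferSet := by
  rw [mem_image_iff_of_add dilate_dilate dilate_zero, upperPiece, mem_preimage]
  convert Iff.rfl using 2
  simp only [dilate, zoom, neg_neg, zpow_one]
  ring

theorem disjoint_dilate_image_pieces : Disjoint (dilate 2 '' lowerPiece) (dilate (-1) '' upperPiece) :=
  disjoint_left.2 fun _ h₁ h₂ => (mem_dilate_image_lowerPiece.1 h₁).2 <|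
    mem_transferSet_iff.2 (Or.inr (Or.inr (mem_dilate_image_upperPiece.1 h₂)))

theorem dilate_image_pieces : dilate 2 '' lowerPiece ∪ dilate (-1) '' upperPiece = Fzero := by
  ext y
  have := Real.pi_pos
  rw [mem_union, mem_dilate_image_lowerPiece, mem_dilate_image_upperPiece, lowerPiece, Set.mem_sdiff,
    mem_transferSet_iff, Fzero_eq, Set.mem_sdiff, show 4 * (y / 4) = y by ring]
  by_cases hq : zoom (y / 4) ∈ transferSet
  · obtain ⟨h₁, h₂⟩ := transferSet_subset hq
    simp only [zoom] at h₁ h₂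
    simp only [hq, or_true, true_iff, mem_Ico]
    exact ⟨⟨by linarith, by linarith⟩, fun hy => by linarith [(Gdilates_subset hy).1]⟩
  · simp only [hq, or_false, mem_Ico, not_or, not_and, not_lt]
    constructor
    · rintro ⟨⟨h₁, h₂⟩, h₃, h₄⟩
      have := h₃ (by linarith)
      exact ⟨⟨by linarith, by linarith⟩, h₄⟩
    · rintro ⟨⟨h₁, h₂⟩, h₃⟩
      exact ⟨⟨by linarith, by linarith⟩, fun _ => by linarith, h₃⟩

theorem goodGzero_lowerPiece_union_upperPiece : GoodGzero (lowerPiece ∪ upperPiece) := by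
  refine ⟨measurableSet_lowerPiece.union measurableSet_upperPiece, ?_, ?_, ?_⟩
  · rintro y (hy | hy)
    · have h : 4 * y ∈ Fzero := dilate_image_pieces ▸ Or.inl
        (mem_dilate_image_lowerPiece.2 (by rwa [mul_div_cancel_left₀ y four_ne_zero]))
      exact Or.inr ⟨4 * y, h, by simp⟩
    · exact Or.inl ⟨y - 2 * π, transferSet_subset hy, sub_add_cancel y _⟩
  · rw [← transl_image_pieces]
    refine congruentVia_union_image transl (by norm_num) measurableSet_lowerPiece
      measurableSet_upperPiece disjoint_lowerPiece_upperPiece ?_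
    rw [funext transl_zero, image_id', transl_image_upperPiece, lowerPiece]
    exact disjoint_sdiff_left
  · rw [← dilate_image_pieces]
    exact congruentVia_union_image dilate (by norm_num) measurableSet_lowerPiece
      measurableSet_upperPiece disjoint_lowerPiece_upperPiece disjoint_dilate_image_pieces

/-- Example 7 of the paper.  There exists a set `G₀` as above, and
for any such `G₀` the symmetric set `W = (−⋃_{n≥0} G_n) ∪ (⋃_{n≥0} G_n)` is a dyadic
wavelet set with `W = −W`; in particular there exists an unbounded symmetric dyadic
wavelet set. -/
theorem stmt_11 :
    (∃ G₀ : Set ℝ, GoodGzero G₀) ∧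
    (∀ G₀ : Set ℝ, GoodGzero G₀ →
      IsDyadicWaveletSet
        (-(G₀ ∪ ⋃ n : ℕ, Gpiece (n + 1)) ∪ (G₀ ∪ ⋃ n : ℕ, Gpiece (n + 1))) ∧
      (-(G₀ ∪ ⋃ n : ℕ, Gpiece (n + 1)) ∪ (G₀ ∪ ⋃ n : ℕ, Gpiece (n + 1)))
        = -(-(G₀ ∪ ⋃ n : ℕ, Gpiece (n + 1)) ∪ (G₀ ∪ ⋃ n : ℕ, Gpiece (n + 1))) ∧
      ∀ M : ℝ, 0 < M →
        0 < volume ((-(G₀ ∪ ⋃ n : ℕ, Gpiece (n + 1)) ∪ (G₀ ∪ ⋃ n : ℕ, Gpiece (n + 1)))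
          \ Icc (-M) M)) := by
  refine ⟨⟨_, goodGzero_lowerPiece_union_upperPiece⟩, fun G₀ hG => ⟨?_, ?_, fun M _ => ?_⟩⟩
  · exact isDyadicWaveletSet_neg_union
      (hG.1.union (MeasurableSet.iUnion fun _ => measurableSet_Ico))
      hG.union_iUnion_Gpiece_subset hG.orbitCount_transl hG.orbitCount_dilate
  · conv_rhs => rw [Set.union_neg, neg_neg, Set.union_comm]
  · exact volume_diff_Icc_pos (subset_union_right.trans subset_union_right) M
end
end

section
/- Let E = [−2π, −π) ∪ [π, 2π) and let G be a dyadic wavelet set with G ⊆ 2E ∪ E ∪ (1/2)E = [−4π, −π/2) ∪ [π/2, 4π). If G ∩ [3π, 4π) has positive Lebesgue measure, then (E, G) is not an interpolation pair; in fact, for a.e. s ∈ (G ∩ [3π, 4π)) − 2π one has (σ_E^G)²(s) = s + 2π + 4kπ for some integer k (depending on s), so (σ_E^G)²(s) ≠ s. -/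
/-!
Take `s` with `s + 2π ∈ G ∩ [3π, 4π)`. Then `s ∈ [π, 2π) ⊆ E`, and `s + 2π` is the unique
`2πℤ`-translate of `s` in `G`, so `σ s = s + 2π`. By dilation `σ (s + 2π) = 2 σ (s/2 + π)`
with `s/2 + π ∈ [3π/2, 2π) ⊆ E`, hence `σ (s/2 + π) = s/2 + π + 2mπ` and
`σ (σ s) = s + 2π + 4mπ ≠ s`, as `4m ≠ -2`. The set of such `s` is a translate of
`G ∩ [3π, 4π)`, so it is not null and `σ ∘ σ ≠ id` on a set of positive measure.
-/


open MeasureTheory Set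
open scoped Real symmDiff

noncomputable section

lemma ae_comp_affine {a : ℝ} (ha : a ≠ 0) (b : ℝ) {P : ℝ → Prop} (h : ∀ᵐ t, P t) :
    ∀ᵐ s, P (a * s + b) := by
  rw [ae_iff] at h ⊢
  have hpre : {s : ℝ | ¬ P (a * s + b)} = (a * ·) ⁻¹' ((· + b) ⁻¹' {t | ¬ P t}) := rfl
  rw [hpre, Real.volume_preimage_mul_left ha, measure_preimage_add_right, h, mul_zero]

lemma volume_image_sub_const (c : ℝ) (A : Set ℝ) :
    volume ((fun x => x - c) '' A) = volume A := by
  have himg : (fun x => x - c) '' A = (· + c) ⁻¹' A := by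
    ext y
    exact ⟨by rintro ⟨x, hx, rfl⟩; simpa using hx, fun hy => ⟨y + c, hy, by ring⟩⟩
  rw [himg, measure_preimage_add_right]

lemma add_two_pi_add_four_mul_pi_ne (s : ℝ) (k : ℤ) : s + 2 * π + 4 * k * π ≠ s := by
  intro h
  have hodd : ((2 * k + 1 : ℤ) : ℝ) * (2 * π) = 0 := by push_cast; linarith
  have : 2 * k + 1 = 0 := by exact_mod_cast (mul_eq_zero.1 hodd).resolve_right (by positivity)
  omega

lemma IsDyadicWaveletSet.ae_translate_mem_unique {G : Set ℝ} (hG : IsDyadicWaveletSet G) :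
    ∀ᵐ s : ℝ, ∀ m n : ℤ, s + 2 * π * m ∈ G → s + 2 * π * n ∈ G → m = n := by
  filter_upwards [hG.2.1] with s hs m n hm hn
  obtain ⟨k, -, hk⟩ := hs
  exact (hk m hm).trans (hk n hn).symm

namespace IsInterpolationMap

variable {E F : Set ℝ} {σ : ℝ → ℝ}

lemma ae_exists_eq_add (hσ : IsInterpolationMap E F σ) :
    ∀ᵐ s, s ∈ E → ∃ n : ℤ, σ s = s + 2 * π * n := by
  filter_upwards [hσ.2.2.1] with s hs hsE
  obtain ⟨-, n, hn⟩ := hs hsE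
  exact ⟨n, by linarith⟩

lemma ae_eq_add_of_add_mem (hσ : IsInterpolationMap E F σ) (hF : IsDyadicWaveletSet F) :
    ∀ᵐ s, s ∈ E → ∀ n : ℤ, s + 2 * π * n ∈ F → σ s = s + 2 * π * n := by
  filter_upwards [hσ.2.2.1, hF.ae_translate_mem_unique] with s hs huniq hsE n hn
  obtain ⟨hσF, m, hm⟩ := hs hsE
  have hσs : σ s = s + 2 * π * m := by linarith
  rw [hσs] at hσF ⊢
  rw [huniq m n hσF hn]

lemma ae_eq_two_mul_of_half_mem (hσ : IsInterpolationMap E F σ) :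
    ∀ᵐ s, s / 2 ∈ E → σ s = 2 * σ (s / 2) := by
  filter_upwards [hσ.2.2.2 1] with s hs
  have hhalf : (2 : ℝ) ^ (-(1 : ℤ)) * s = s / 2 := by rw [zpow_neg_one]; ring
  rwa [hhalf, zpow_one] at hs

lemma ae_exists_comp_self_eq (hσ : IsInterpolationMap E F σ) (hF : IsDyadicWaveletSet F) :
    ∀ᵐ s, s ∈ E → s + 2 * π ∈ F → s / 2 + π ∈ E →
      ∃ k : ℤ, σ (σ s) = s + 2 * π + 4 * k * π := by
  have hdil : ∀ᵐ s, (s + 2 * π) / 2 ∈ E → σ (s + 2 * π) = 2 * σ ((s + 2 * π) / 2) := by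
    simpa using ae_comp_affine one_ne_zero (2 * π) hσ.ae_eq_two_mul_of_half_mem
  have hmid : ∀ᵐ s, s / 2 + π ∈ E → ∃ n : ℤ, σ (s / 2 + π) = s / 2 + π + 2 * π * n := by
    simpa [div_eq_inv_mul] using ae_comp_affine (inv_ne_zero two_ne_zero) π hσ.ae_exists_eq_add
  filter_upwards [hσ.ae_eq_add_of_add_mem hF, hdil, hmid] with s hshift hdil hmid hsE hsF hmidE
  have hσs : σ s = s + 2 * π := by simpa using hshift hsE 1 (by simpa using hsF)
  have hmid_eq : (s + 2 * π) / 2 = s / 2 + π := by ring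
  obtain ⟨m, hm⟩ := hmid hmidE
  refine ⟨m, ?_⟩
  rw [hσs, hdil (hmid_eq ▸ hmidE), hmid_eq, hm]
  ring

end IsInterpolationMap

theorem stmt_12_general (G : Set ℝ) (hG : IsDyadicWaveletSet G)
    (hpos : 0 < volume (G ∩ Ico (3 * π) (4 * π)))
    (σ : ℝ → ℝ)
    (hσ : IsInterpolationMap (Ico (-(2 * π)) (-π) ∪ Ico π (2 * π)) G σ) :
    (∀ᵐ s : ℝ ∂volume, s ∈ (fun x => x - 2 * π) '' (G ∩ Ico (3 * π) (4 * π)) →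
      (∃ k : ℤ, σ (σ s) = s + 2 * π + 4 * (k : ℝ) * π) ∧ σ (σ s) ≠ s) ∧
    ¬ (∀ᵐ s : ℝ ∂volume, σ (σ s) = s) := by
  have hπ := Real.pi_pos
  have main : ∀ᵐ s : ℝ ∂volume, s ∈ (fun x => x - 2 * π) '' (G ∩ Ico (3 * π) (4 * π)) →
      (∃ k : ℤ, σ (σ s) = s + 2 * π + 4 * (k : ℝ) * π) ∧ σ (σ s) ≠ s := by
    filter_upwards [hσ.ae_exists_comp_self_eq hG] with s hs ⟨x, ⟨hxG, hx3, hx4⟩, hxs⟩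
    subst hxs
    obtain ⟨k, hk⟩ := hs (Or.inr ⟨by linarith, by linarith⟩) (by simpa using hxG)
      (Or.inr ⟨by linarith, by linarith⟩)
    exact ⟨⟨k, hk⟩, hk ▸ add_two_pi_add_four_mul_pi_ne _ k⟩
  refine ⟨main, fun hinv => hpos.ne' ?_⟩
  rw [← volume_image_sub_const (2 * π), measure_eq_zero_iff_ae_notMem]
  filter_upwards [main, hinv] with s hs hinv hmem
  exact (hs hmem).2 hinv

/-- from Example 8 of the paper.  Let `E = [−2π, −π) ∪ [π, 2π)` and
let `G` be a dyadic wavelet set with `G ⊆ 2E ∪ E ∪ (1/2)E = [−4π, −π/2) ∪ [π/2, 4π)`.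
If `G ∩ [3π, 4π)` has positive measure, then for a.e. `s ∈ (G ∩ [3π, 4π)) − 2π` one
has `(σ_E^G)²(s) = s + 2π + 4kπ` for some integer `k`, so `(σ_E^G)²(s) ≠ s`; in
particular `(E, G)` is not an interpolation pair. -/
theorem stmt_12 (G : Set ℝ) (hG : IsDyadicWaveletSet G)
    (hGsub : G ⊆ Ico (-(4 * π)) (-(π / 2)) ∪ Ico (π / 2) (4 * π))
    (hpos : 0 < volume (G ∩ Ico (3 * π) (4 * π)))
    (σ : ℝ → ℝ)
    (hσ : IsInterpolationMap (Ico (-(2 * π)) (-π) ∪ Ico π (2 * π)) G σ) :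
    (∀ᵐ s : ℝ ∂volume, s ∈ (fun x => x - 2 * π) '' (G ∩ Ico (3 * π) (4 * π)) →
      (∃ k : ℤ, σ (σ s) = s + 2 * π + 4 * (k : ℝ) * π) ∧ σ (σ s) ≠ s) ∧
    ¬ (∀ᵐ s : ℝ ∂volume, σ (σ s) = s) :=
  stmt_12_general G hG hpos σ hσ
end
end

section
/- Let E = [−2π, −π) ∪ [π, 2π) and let G be a dyadic wavelet set with G ⊆ (E − 2π) ∪ E ∪ (E + 2π) = [−4π, −3π) ∪ [−2π, 2π) ∪ [3π, 4π). If G ∩ [−π, π) has positive Lebesgue measure, then (E, G) is not an interpolation pair; in fact, if G ∩ [0, π) has positive measure then for a.e. s ∈ (G ∩ [0, π)) − 2π one has (σ_E^G)²(s) = s + 2π + 2^{-k}·2nπ for some integer k > 0 and some n ∈ {−1, 0, 1}, so (σ_E^G)²(s) ≠ s. -/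
open MeasureTheory Set
open scoped Real symmDiff

noncomputable section

/-!
Every nonzero `g ∈ [-π, π)` has a dilate `2 ^ k * g`, `k > 0`, in the Shannon set
`E = [-2π, -π) ∪ [π, 2π)`, and `σ` moves that dilate by some `2πm` into `G`. The `2π`-translates
of `E` are disjoint and `G` only meets `E - 2π`, `E` and `E + 2π`, so `m ∈ {-1, 0, 1}` and
`σ g = g + 2 ^ (-k) * 2πm` lies within `π` of `g`.

If `s ∈ E` and `g = s + 2πj ∈ G ∩ [-π, π)`, then `j ≠ 0`, and since the `2π`-translate of `s`
lying in `G` is a.e. unique, `σ s = g`; hence `σ (σ s)` lies within `π` of `s + 2πj` and is not `s`.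
Every point of `G ∩ [-π, π)` is such a `g`, so if this set has positive measure, `σ ∘ σ ≠ id` on a
set of positive measure.
-/

def shannonSet : Set ℝ := Ico (-(2 * π)) (-π) ∪ Ico π (2 * π)

lemma exists_zpow_two_mul_mem_Ico {a x : ℝ} (ha : 0 < a) (hx : 0 < x) :
    ∃ k : ℤ, (2 : ℝ) ^ k * x ∈ Ico a (2 * a) := by
  obtain ⟨n, hn, hn'⟩ := exists_mem_Ioc_zpow (div_pos ha hx) one_lt_two
  rw [lt_div_iff₀ hx] at hn
  rw [div_le_iff₀ hx] at hn'
  refine ⟨n + 1, hn', ?_⟩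
  rw [zpow_add_one₀ two_ne_zero]
  linarith

lemma exists_zpow_two_mul_mem_Ioc {a x : ℝ} (ha : 0 < a) (hx : 0 < x) :
    ∃ k : ℤ, (2 : ℝ) ^ k * x ∈ Ioc a (2 * a) := by
  obtain ⟨n, hn, hn'⟩ := exists_mem_Ico_zpow (div_pos ha hx) one_lt_two
  rw [le_div_iff₀ hx] at hn
  rw [div_lt_iff₀ hx] at hn'
  refine ⟨n + 1, hn', ?_⟩
  rw [zpow_add_one₀ two_ne_zero]
  linarith

lemma pos_of_lt_zpow_two_mul {k : ℤ} {y : ℝ} (hy : 0 < y) (h : y < (2 : ℝ) ^ k * y) : 0 < k :=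
  (one_lt_zpow_iff_right₀ one_lt_two).1 ((lt_mul_iff_one_lt_left hy).1 h)

lemma exists_pos_zpow_two_mul_mem_shannonSet {x : ℝ} (hx : x ∈ Ico (-π) π) (hx0 : x ≠ 0) :
    ∃ k : ℤ, 0 < k ∧ (2 : ℝ) ^ k * x ∈ shannonSet := by
  obtain ⟨hx₁, hx₂⟩ := hx
  rcases hx0.lt_or_gt with hneg | hpos
  · obtain ⟨k, hk₁, hk₂⟩ := exists_zpow_two_mul_mem_Ioc Real.pi_pos (neg_pos.2 hneg)
    refine ⟨k, pos_of_lt_zpow_two_mul (neg_pos.2 hneg) (by linarith), Or.inl ⟨?_, ?_⟩⟩ <;> linarith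
  · obtain ⟨k, hk₁, hk₂⟩ := exists_zpow_two_mul_mem_Ico Real.pi_pos hpos
    exact ⟨k, pos_of_lt_zpow_two_mul hpos (by linarith), Or.inr ⟨hk₁, hk₂⟩⟩

lemma eq_zero_of_add_two_pi_mul_mem_shannonSet {t : ℝ} {n : ℤ} (ht : t ∈ shannonSet)
    (htn : t + 2 * π * n ∈ shannonSet) : n = 0 := by
  have hπ := Real.pi_pos
  have hbound : ∀ x ∈ shannonSet, -(2 * π) ≤ x ∧ x < 2 * π := by
    rintro x (⟨h₁, h₂⟩ | ⟨h₁, h₂⟩) <;> constructor <;> linarith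
  obtain ⟨ht₁, ht₂⟩ := hbound t ht
  obtain ⟨htn₁, htn₂⟩ := hbound _ htn
  have hlt : (n : ℝ) < 2 := by nlinarith
  have hgt : (-2 : ℝ) < n := by nlinarith
  by_contra hn0
  have hn : n = -1 ∨ n = 1 := by
    have : n < 2 := by exact_mod_cast hlt
    have : -2 < n := by exact_mod_cast hgt
    omega
  rcases hn with rfl | rfl <;> push_cast at htn <;>
    rcases ht with ⟨_, _⟩ | ⟨_, _⟩ <;> rcases htn with ⟨_, _⟩ | ⟨_, _⟩ <;> linarith

lemma exists_sub_two_pi_mul_mem_shannonSet {x : ℝ}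
    (hx : x ∈ Ico (-(4 * π)) (-(3 * π)) ∪ Ico (-(2 * π)) (2 * π) ∪ Ico (3 * π) (4 * π)) :
    ∃ j : ℤ, (j = -1 ∨ j = 0 ∨ j = 1) ∧ x - 2 * π * j ∈ shannonSet := by
  simp only [shannonSet, mem_union, mem_Ico] at hx ⊢
  rcases hx with (⟨h₁, h₂⟩ | ⟨h₁, h₂⟩) | ⟨h₁, h₂⟩
  · exact ⟨-1, by norm_num, by push_cast; left; constructor <;> linarith⟩
  · rcases lt_or_ge x (-π) with h₃ | h₃
    · exact ⟨0, by norm_num, by push_cast; left; constructor <;> linarith⟩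
    rcases lt_or_ge x 0 with h₄ | h₄
    · exact ⟨-1, by norm_num, by push_cast; right; constructor <;> linarith⟩
    rcases lt_or_ge x π with h₅ | h₅
    · exact ⟨1, by norm_num, by push_cast; left; constructor <;> linarith⟩
    · exact ⟨0, by norm_num, by push_cast; right; constructor <;> linarith⟩
  · exact ⟨1, by norm_num, by push_cast; right; constructor <;> linarith⟩

lemma eq_neg_one_or_eq_zero_or_eq_one_of_add_two_pi_mul_mem {t : ℝ} {m : ℤ}
    (ht : t ∈ shannonSet) (htm : t + 2 * π * m ∈
      Ico (-(4 * π)) (-(3 * π)) ∪ Ico (-(2 * π)) (2 * π) ∪ Ico (3 * π) (4 * π)) :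
    m = -1 ∨ m = 0 ∨ m = 1 := by
  obtain ⟨j, hj, hmem⟩ := exists_sub_two_pi_mul_mem_shannonSet htm
  have hshift : t + 2 * π * m - 2 * π * j = t + 2 * π * ((m - j : ℤ) : ℝ) := by push_cast; ring
  rw [hshift] at hmem
  have := eq_zero_of_add_two_pi_mul_mem_shannonSet ht hmem
  omega

lemma IsInterpolationMap.ae_dilate {E F : Set ℝ} {σ : ℝ → ℝ} (hσ : IsInterpolationMap E F σ) :
    ∀ᵐ g : ℝ, ∀ k : ℤ, (2 : ℝ) ^ k * g ∈ E →
      σ (2 ^ k * g) ∈ F ∧ (∃ n : ℤ, σ (2 ^ k * g) - 2 ^ k * g = 2 * π * n) ∧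
        σ g = 2 ^ (-k) * σ (2 ^ k * g) := by
  obtain ⟨-, -, hEF, hdil⟩ := hσ
  refine ae_all_iff.2 fun k => ?_
  have hEF' := (Measure.quasiMeasurePreserving_smul volume
    (zpow_ne_zero k (two_ne_zero : (2 : ℝ) ≠ 0))).ae hEF
  filter_upwards [hEF', hdil (-k)] with g hg hg' hk
  rw [neg_neg] at hg'
  exact ⟨(hg hk).1, (hg hk).2, hg' hk⟩

lemma IsInterpolationMap.ae_eq_add_of_add_mem_s14 {E G : Set ℝ} {σ : ℝ → ℝ}
    (hG : IsDyadicWaveletSet G) (hσ : IsInterpolationMap E G σ) :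
    ∀ᵐ s : ℝ, s ∈ E → ∀ j : ℤ, s + 2 * π * j ∈ G → σ s = s + 2 * π * j := by
  filter_upwards [hG.2.1, hσ.2.2.1] with s ⟨_, _, huniq⟩ hs hsE j hj
  obtain ⟨hσG, n, hn⟩ := hs hsE
  have hσs : σ s = s + 2 * π * n := by linarith
  rw [hσs, (huniq n (show s + 2 * π * n ∈ G from hσs ▸ hσG)).trans (huniq j hj).symm]

section Shannon

variable {G : Set ℝ} {σ : ℝ → ℝ}

lemma eq_add_zpow_two_mul_of_mem_Ico
    (hGsub : G ⊆ Ico (-(4 * π)) (-(3 * π)) ∪ Ico (-(2 * π)) (2 * π) ∪ Ico (3 * π) (4 * π))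
    {g : ℝ} (hg : g ∈ Ico (-π) π) (hg0 : g ≠ 0)
    (hdil : ∀ k : ℤ, (2 : ℝ) ^ k * g ∈ shannonSet →
      σ (2 ^ k * g) ∈ G ∧ (∃ n : ℤ, σ (2 ^ k * g) - 2 ^ k * g = 2 * π * n) ∧
        σ g = 2 ^ (-k) * σ (2 ^ k * g)) :
    ∃ k : ℤ, 0 < k ∧ ∃ n : ℤ, (n = -1 ∨ n = 0 ∨ n = 1) ∧
      σ g = g + (2 : ℝ) ^ (-k) * (2 * (n : ℝ) * π) := by
  obtain ⟨k, hk, hkE⟩ := exists_pos_zpow_two_mul_mem_shannonSet hg hg0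
  obtain ⟨hσG, ⟨m, hm⟩, hσg⟩ := hdil k hkE
  have hσk : σ (2 ^ k * g) = 2 ^ k * g + 2 * π * m := by linarith
  refine ⟨k, hk, m,
    eq_neg_one_or_eq_zero_or_eq_one_of_add_two_pi_mul_mem hkE (hσk ▸ hGsub hσG), ?_⟩
  rw [hσg, hσk, mul_add, ← mul_assoc, ← zpow_add₀ two_ne_zero, neg_add_cancel, zpow_zero,
    one_mul]
  ring

lemma ae_interpolationMap_sq_eq (hG : IsDyadicWaveletSet G)
    (hGsub : G ⊆ Ico (-(4 * π)) (-(3 * π)) ∪ Ico (-(2 * π)) (2 * π) ∪ Ico (3 * π) (4 * π))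
    (hσ : IsInterpolationMap shannonSet G σ) :
    ∀ᵐ s : ℝ, ∀ j : ℤ, s ∈ shannonSet → s + 2 * π * j ∈ G ∩ Ico (-π) π →
      ∃ k : ℤ, 0 < k ∧ ∃ n : ℤ, (n = -1 ∨ n = 0 ∨ n = 1) ∧
        σ (σ s) = s + 2 * π * j + (2 : ℝ) ^ (-k) * (2 * (n : ℝ) * π) := by
  have hdil := ae_all_iff.2 fun j : ℤ =>
    (measurePreserving_add_right volume (2 * π * j)).quasiMeasurePreserving.ae hσ.ae_dilate
  have hne := ae_all_iff.2 fun j : ℤ =>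
    (measurePreserving_add_right volume (2 * π * j)).quasiMeasurePreserving.ae (volume.ae_ne 0)
  filter_upwards [hσ.ae_eq_add_of_add_mem_s14 hG, hdil, hne] with s hσs hdil hne j hs ⟨hgG, hgI⟩
  rw [hσs hs j hgG]
  exact eq_add_zpow_two_mul_of_mem_Ico hGsub hgI (hne j) (hdil j)

end Shannon

lemma add_add_zpow_two_mul_ne_self {s : ℝ} {j k n : ℤ} (hs : s ∈ shannonSet)
    (hj : s + 2 * π * j ∈ Ico (-π) π) (hk : 0 < k) (hn : n = -1 ∨ n = 0 ∨ n = 1) :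
    s + 2 * π * j + (2 : ℝ) ^ (-k) * (2 * (n : ℝ) * π) ≠ s := by
  have hπ := Real.pi_pos
  have hj0 : j ≠ 0 := by
    rintro rfl
    obtain ⟨hj₁, hj₂⟩ := hj
    simp only [Int.cast_zero, mul_zero, add_zero] at hj₁ hj₂
    rcases hs with ⟨_, _⟩ | ⟨_, _⟩ <;> linarith
  have hc₀ : (0 : ℝ) < 2 ^ (-k) := by positivity
  have hc : (2 : ℝ) ^ (-k) ≤ 2 ^ (-1 : ℤ) := zpow_le_zpow_right₀ one_le_two (by omega)
  rw [zpow_neg_one] at hc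
  intro h
  rcases hj0.lt_or_gt with hj | hj
  · have : (j : ℝ) ≤ -1 := by exact_mod_cast Int.le_sub_one_of_lt hj
    rcases hn with rfl | rfl | rfl <;> push_cast at h <;> nlinarith
  · have : (1 : ℝ) ≤ j := by exact_mod_cast hj
    rcases hn with rfl | rfl | rfl <;> push_cast at h <;> nlinarith

/-- from Example 9 of the paper.  Let `E = [−2π, −π) ∪ [π, 2π)` and
let `G` be a dyadic wavelet set with
`G ⊆ (E − 2π) ∪ E ∪ (E + 2π) = [−4π, −3π) ∪ [−2π, 2π) ∪ [3π, 4π)`.  If `G ∩ [−π, π)`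
has positive measure then `(E, G)` is not an interpolation pair; in fact, if
`G ∩ [0, π)` has positive measure, then for a.e. `s ∈ (G ∩ [0, π)) − 2π` one has
`(σ_E^G)²(s) = s + 2π + 2^{−k}·2nπ` for some integer `k > 0` and some
`n ∈ {−1, 0, 1}`, so `(σ_E^G)²(s) ≠ s`. -/
theorem stmt_14 (G : Set ℝ) (hG : IsDyadicWaveletSet G)
    (hGsub : G ⊆ Ico (-(4 * π)) (-(3 * π)) ∪ Ico (-(2 * π)) (2 * π) ∪ Ico (3 * π) (4 * π))
    (σ : ℝ → ℝ)
    (hσ : IsInterpolationMap (Ico (-(2 * π)) (-π) ∪ Ico π (2 * π)) G σ) :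
    (0 < volume (G ∩ Ico (-π) π) → ¬ (∀ᵐ s : ℝ ∂volume, σ (σ s) = s)) ∧
    (0 < volume (G ∩ Ico 0 π) →
      ∀ᵐ s : ℝ ∂volume, s ∈ (fun x => x - 2 * π) '' (G ∩ Ico 0 π) →
        (∃ k : ℤ, 0 < k ∧ ∃ n : ℤ, (n = -1 ∨ n = 0 ∨ n = 1) ∧
          σ (σ s) = s + 2 * π + (2 : ℝ) ^ (-k) * (2 * (n : ℝ) * π)) ∧
        σ (σ s) ≠ s) := by
  have key := ae_interpolationMap_sq_eq hG hGsub hσ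
  have hsq_ne : ∀ᵐ s : ℝ, ∀ j : ℤ, s ∈ shannonSet → s + 2 * π * j ∈ G ∩ Ico (-π) π →
      σ (σ s) ≠ s := by
    filter_upwards [key] with s hs j hsE hsG
    obtain ⟨k, hk, n, hn, heq⟩ := hs j hsE hsG
    exact heq ▸ add_add_zpow_two_mul_ne_self hsE hsG.2 hk hn
  refine ⟨fun hpos hid => hpos.ne' ?_, fun _ => ?_⟩
  · have hnotMem : ∀ᵐ g : ℝ, ∀ j : ℤ, g - 2 * π * j ∈ shannonSet → g ∉ G ∩ Ico (-π) π := by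
      refine ae_all_iff.2 fun j => ?_
      have hshift := (measurePreserving_add_right volume (-(2 * π * j))).quasiMeasurePreserving.ae
        (hsq_ne.and hid)
      filter_upwards [hshift] with g ⟨hne, hid⟩ hgE hg
      rw [← sub_eq_add_neg] at hne hid
      exact hne j hgE (by rwa [sub_add_cancel]) hid
    rw [measure_eq_zero_iff_ae_notMem]
    filter_upwards [hnotMem] with g hg hgG
    obtain ⟨j, -, hj⟩ := exists_sub_two_pi_mul_mem_shannonSet (hGsub hgG.1)
    exact hg j hj hgG
  · filter_upwards [key, hsq_ne] with s hs hs' ⟨g, ⟨hgG, hg₀, hgπ⟩, hgs⟩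
    have hsE : s ∈ shannonSet := Or.inl ⟨by linarith, by linarith⟩
    have hsg : s + 2 * π * ((1 : ℤ) : ℝ) ∈ G ∩ Ico (-π) π := by
      rw [← hgs, Int.cast_one, mul_one, sub_add_cancel]
      exact ⟨hgG, by linarith [Real.pi_pos], hgπ⟩
    obtain ⟨k, hk, n, hn, heq⟩ := hs 1 hsE hsg
    exact ⟨⟨k, hk, n, hn, by rw [heq, Int.cast_one, mul_one]⟩, hs' 1 hsE hsg⟩
end
end

section
/- For integers l, m, n ≥ 1, define G₊(l, m) = ((2^l/(2^{l+m}−1))π, 2^{1−m}π) ∪ [2^lπ, 2^lπ + (2^l/(2^{l+m}−1))π) and G₋(m, n) = [−2^{m+n}π + 2^nπ − ((2^{m+n}−2^n)/(2^{m+n}−1))π, −2^{m+n}π + 2^nπ) ∪ [−2π + 2^{1−m}π, −((2^{m+n}−2^n)/(2^{m+n}−1))π). Then G₊(l, m) is 2π-translation congruent to [0, 2^{1−m}π) and 2-dilation congruent to [π, 2π); G₋(m, n) is 2π-translation congruent to [−2π + 2^{1−m}π, 0) and 2-dilation congruent to [−2π + 2^{1−m}π, −π + 2^{-m}π); and consequently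 G₋(m, n) ∪ G₊(l, m) is a dyadic wavelet set (these are the wavelet sets K_{l,m,n} of Fang–Wang). -/
/-!
Write `L = 2^l`, `M = 2^m`, `N = 2^n`, `A = Lπ/(LM - 1)` and `B = (MN - N)π/(MN - 1)`.
The identities `A (LM - 1) = Lπ` and `B (MN - 1) = (MN - N)π` say exactly that
`[Lπ, Lπ + A) = L • [π, MA)` and `[-MNπ + Nπ - B, -MNπ + Nπ) = MN • [-B, -π + π/M)`, while
`Lπ` and `(MN - N)π` are multiples of `2π`. So each of `G₊`, `G₋` consists of two intervals that
one translation (resp. one dilation) moves onto adjacent intervals. Tiling passes along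
congruences, and `G₋ ∪ G₊` is translation congruent to the interval `[-2π + 2π/M, 2π/M)` of
length `2π` and dilation congruent to `[-2π + 2π/M, -π + π/M) ∪ [π, 2π)`, which tile `ℝ` under
`2πℤ`-translations and `2^ℤ`-dilations respectively.
-/

open MeasureTheory Set
open scoped Real symmDiff

noncomputable section

/-- `G₊(l, m) = ((2^l/(2^{l+m}−1))π, 2^{1−m}π) ∪ [2^lπ, 2^lπ + (2^l/(2^{l+m}−1))π)`. -/
def Gplus (l m : ℤ) : Set ℝ :=
  Ioo (((2 : ℝ) ^ l / ((2 : ℝ) ^ (l + m) - 1)) * π) ((2 : ℝ) ^ (1 - m) * π) ∪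
    Ico ((2 : ℝ) ^ l * π) ((2 : ℝ) ^ l * π + ((2 : ℝ) ^ l / ((2 : ℝ) ^ (l + m) - 1)) * π)

/-- `G₋(m, n) = [−2^{m+n}π + 2^nπ − ((2^{m+n}−2^n)/(2^{m+n}−1))π, −2^{m+n}π + 2^nπ)
∪ [−2π + 2^{1−m}π, −((2^{m+n}−2^n)/(2^{m+n}−1))π)`. -/
def Gminus (m n : ℤ) : Set ℝ :=
  Ico (-(2 : ℝ) ^ (m + n) * π + (2 : ℝ) ^ n * π -
        (((2 : ℝ) ^ (m + n) - (2 : ℝ) ^ n) / ((2 : ℝ) ^ (m + n) - 1)) * π)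
      (-(2 : ℝ) ^ (m + n) * π + (2 : ℝ) ^ n * π) ∪
    Ico (-(2 * π) + (2 : ℝ) ^ (1 - m) * π)
      (-((((2 : ℝ) ^ (m + n) - (2 : ℝ) ^ n) / ((2 : ℝ) ^ (m + n) - 1)) * π))


namespace IsAEPartition

variable {ι : Type*} {P Q : ι → Set ℝ} {A B : Set ℝ}

lemma ae_eq (h : IsAEPartition P A) : A =ᵐ[volume] ⋃ i, P i :=
  measure_symmDiff_eq_zero_iff.1 h.1

lemma congr_right (h : IsAEPartition P A) (hAB : A =ᵐ[volume] B) : IsAEPartition P B :=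
  ⟨measure_symmDiff_eq_zero_iff.2 (hAB.symm.trans h.ae_eq), h.2⟩

lemma of_eq_empty {k : ι} (h : ∀ i, i ≠ k → P i = ∅) : IsAEPartition P (P k) := by
  have hU : (⋃ i, P i) = P k := by
    refine (iUnion_subset fun i => ?_).antisymm (subset_iUnion P k)
    rcases eq_or_ne i k with rfl | hi
    · exact subset_rfl
    · simp [h i hi]
  refine ⟨by simp [hU], fun i j hij => ?_⟩
  rcases eq_or_ne i k with rfl | hi
  · simp [h j hij.symm]
  · simp [h i hi]

lemma union (hP : IsAEPartition P A) (hQ : IsAEPartition Q B) (hAB : AEDisjoint volume A B) :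
    IsAEPartition (fun i => P i ∪ Q i) (A ∪ B) := by
  refine ⟨measure_symmDiff_eq_zero_iff.2 ?_, fun i j hij => ?_⟩
  · rw [iUnion_union_distrib]
    exact hP.ae_eq.union hQ.ae_eq
  · rw [measure_eq_zero_iff_ae_notMem]
    filter_upwards [Filter.eventuallyEq_set.1 hP.ae_eq, Filter.eventuallyEq_set.1 hQ.ae_eq,
      measure_eq_zero_iff_ae_notMem.1 hAB, measure_eq_zero_iff_ae_notMem.1 (hP.2 i j hij),
      measure_eq_zero_iff_ae_notMem.1 (hQ.2 i j hij)] with x hA hB hAB hPij hQij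
    simp only [mem_iUnion, mem_inter_iff, mem_union] at *
    have hPA : ∀ i, x ∈ P i → x ∈ A := fun i hi => hA.2 ⟨i, hi⟩
    have hQB : ∀ i, x ∈ Q i → x ∈ B := fun i hi => hB.2 ⟨i, hi⟩
    rintro ⟨hi | hi, hj | hj⟩
    exacts [hPij ⟨hi, hj⟩, hAB ⟨hPA i hi, hQB j hj⟩, hAB ⟨hPA j hj, hQB i hi⟩, hQij ⟨hi, hj⟩]

end IsAEPartition

lemma aedisjoint_of_forall_lt {s t : Set ℝ} (h : ∀ x ∈ s, ∀ y ∈ t, x < y) :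
    AEDisjoint volume s t :=
  Disjoint.aedisjoint <| disjoint_left.2 fun x hs ht => (h x hs x ht).false

lemma Ioo_union_Ico_ae_eq {a b c : ℝ} (hab : a ≤ b) (hbc : b ≤ c) :
    (Ioo b c ∪ Ico a b : Set ℝ) =ᵐ[volume] Ico a c := by
  rw [union_comm, ← Ico_union_Ico_eq_Ico hab hbc]
  exact (ae_eq_refl _).union Ioo_ae_eq_Ico

def twoPiTranslate (n : ℤ) (x : ℝ) : ℝ := x + 2 * π * n

def dyadicDilate (n : ℤ) (x : ℝ) : ℝ := 2 ^ n * x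

/-- `TransCongruent` and `DilCongruent` are the cases `g = twoPiTranslate` and
`g = dyadicDilate`. -/
def IsCongruentUnder (g : ℤ → ℝ → ℝ) (A B : Set ℝ) : Prop :=
  ∃ P : ℤ → Set ℝ, (∀ n, MeasurableSet (P n)) ∧ IsAEPartition P A ∧
    IsAEPartition (fun n => g n '' P n) B

def Tiles (g : ℤ → ℝ → ℝ) (E : Set ℝ) : Prop :=
  ∀ᵐ x, ∃! n : ℤ, g n x ∈ E

namespace IsCongruentUnder

variable {g : ℤ → ℝ → ℝ} {A A' B B' : Set ℝ}

lemma of_image_eq (hA : MeasurableSet A) (k : ℤ) (hB : g k '' A = B) : IsCongruentUnder g A B := by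
  classical
  have hP : ∀ n, n ≠ k → (if n = k then A else ∅) = ∅ := fun n hn => if_neg hn
  refine ⟨fun n => if n = k then A else ∅, fun n => ?_, ?_, ?_⟩
  · dsimp only
    split_ifs
    exacts [hA, MeasurableSet.empty]
  · simpa using IsAEPartition.of_eq_empty hP
  · have := IsAEPartition.of_eq_empty (P := fun n => g n '' if n = k then A else ∅) (k := k)
      fun n hn => by simp only [hP n hn, image_empty]
    simpa [hB] using this

lemma union (h : IsCongruentUnder g A B) (h' : IsCongruentUnder g A' B')
    (hA : AEDisjoint volume A A') (hB : AEDisjoint volume B B') :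
    IsCongruentUnder g (A ∪ A') (B ∪ B') := by
  obtain ⟨P, hPm, hPA, hPB⟩ := h
  obtain ⟨Q, hQm, hQA, hQB⟩ := h'
  refine ⟨fun n => P n ∪ Q n, fun n => (hPm n).union (hQm n), hPA.union hQA hA, ?_⟩
  simpa only [image_union] using hPB.union hQB hB

lemma congr_right (h : IsCongruentUnder g A B) (hB : B =ᵐ[volume] B') :
    IsCongruentUnder g A B' :=
  let ⟨P, hPm, hPA, hPB⟩ := h
  ⟨P, hPm, hPA, hPB.congr_right hB⟩

end IsCongruentUnder

section Tiling

variable {g : ℤ → ℝ → ℝ}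

lemma existsUnique_mem_of_forall_orbit (hadd : ∀ a b x, g (a + b) x = g a (g b x))
    (hzero : ∀ x, g 0 x = x) {P : ℤ → Set ℝ} {E F : Set ℝ} {x : ℝ}
    (hE : ∀ k, g k x ∈ E ↔ g k x ∈ ⋃ i, P i)
    (hF : ∀ k, g k x ∈ F ↔ g k x ∈ ⋃ i, g i '' P i)
    (hdisj : ∀ k i j, g k x ∈ g i '' P i → g k x ∈ g j '' P j → i = j)
    (htile : ∃! n, g n x ∈ F) : ∃! n, g n x ∈ E := by
  obtain ⟨j, hj, hj_unique⟩ := htile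
  obtain ⟨i, y, hy, hyx⟩ := mem_iUnion.1 ((hF j).1 hj)
  refine ⟨-i + j, (hE _).2 (mem_iUnion.2 ⟨i, ?_⟩), fun k hk => ?_⟩
  · rwa [hadd, ← hyx, ← hadd, neg_add_cancel, hzero]
  · obtain ⟨a, ha⟩ := mem_iUnion.1 ((hE k).1 hk)
    have hak : g (a + k) x ∈ g a '' P a := by
      rw [hadd]
      exact mem_image_of_mem _ ha
    have hj' : a + k = j := hj_unique _ ((hF _).2 (mem_iUnion.2 ⟨a, hak⟩))
    have hai : a = i := hdisj j a i (hj' ▸ hak) (hyx ▸ mem_image_of_mem _ hy)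
    omega

/-- The orbit of a.e. point avoids all the exceptional null sets, and along such an orbit the
pieces match the tiles one-to-one. -/
lemma Tiles.of_isCongruentUnder (hadd : ∀ a b x, g (a + b) x = g a (g b x))
    (hzero : ∀ x, g 0 x = x) (hnull : ∀ n s, volume s = 0 → volume (g n ⁻¹' s) = 0)
    {E F : Set ℝ} (hEF : IsCongruentUnder g E F) (hF : Tiles g F) : Tiles g E := by
  obtain ⟨P, -, hP, hQ⟩ := hEF
  have horbit : ∀ {p : ℝ → Prop}, (∀ᵐ y, p y) → ∀ᵐ x, ∀ k, p (g k x) := fun h =>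
    ae_all_iff.2 fun k => ae_iff.2 (hnull k _ (ae_iff.1 h))
  have hdisj : ∀ᵐ y, ∀ i j, y ∈ g i '' P i → y ∈ g j '' P j → i = j := by
    refine ae_all_iff.2 fun i => ae_all_iff.2 fun j => ?_
    rcases eq_or_ne i j with hij | hij
    · exact ae_of_all _ fun _ _ _ => hij
    · filter_upwards [measure_eq_zero_iff_ae_notMem.1 (hQ.2 i j hij)] with y hy hi hj
      exact absurd ⟨hi, hj⟩ hy
  filter_upwards [hF, horbit (Filter.eventuallyEq_set.1 hP.ae_eq),
    horbit (Filter.eventuallyEq_set.1 hQ.ae_eq), horbit hdisj] with x hx hE hF hdisj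
  exact existsUnique_mem_of_forall_orbit hadd hzero hE hF hdisj hx

end Tiling

lemma twoPiTranslate_zero : twoPiTranslate 0 = id :=
  funext fun x => by simp [twoPiTranslate]

lemma dyadicDilate_zero : dyadicDilate 0 = id :=
  funext fun x => by simp [dyadicDilate]

lemma twoPiTranslate_add (a b : ℤ) (x : ℝ) :
    twoPiTranslate (a + b) x = twoPiTranslate a (twoPiTranslate b x) := by
  simp only [twoPiTranslate, Int.cast_add]
  ring

lemma dyadicDilate_add (a b : ℤ) (x : ℝ) :
    dyadicDilate (a + b) x = dyadicDilate a (dyadicDilate b x) := by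
  simp only [dyadicDilate, zpow_add₀ (two_ne_zero' ℝ), mul_assoc]

lemma volume_twoPiTranslate_preimage (n : ℤ) (s : Set ℝ) :
    volume (twoPiTranslate n ⁻¹' s) = volume s :=
  measure_preimage_add_right volume _ s

lemma volume_dyadicDilate_preimage_eq_zero (n : ℤ) {s : Set ℝ} (hs : volume s = 0) :
    volume (dyadicDilate n ⁻¹' s) = 0 := by
  change volume ((fun x => (2 : ℝ) ^ n * x) ⁻¹' s) = 0
  rw [Real.volume_preimage_mul_left (zpow_ne_zero n two_ne_zero), hs, mul_zero]

lemma Tiles.of_transCongruent {E F : Set ℝ} (hEF : TransCongruent E F)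
    (hF : Tiles twoPiTranslate F) : Tiles twoPiTranslate E :=
  Tiles.of_isCongruentUnder twoPiTranslate_add (congrFun twoPiTranslate_zero)
    (fun n s hs => (volume_twoPiTranslate_preimage n s).trans hs) hEF hF

lemma Tiles.of_dilCongruent {E F : Set ℝ} (hEF : DilCongruent E F)
    (hF : Tiles dyadicDilate F) : Tiles dyadicDilate E :=
  Tiles.of_isCongruentUnder dyadicDilate_add (congrFun dyadicDilate_zero)
    (fun n _ hs => volume_dyadicDilate_preimage_eq_zero n hs) hEF hF

lemma twoPiTranslate_image_Ico (n : ℤ) (b c : ℝ) :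
    twoPiTranslate n '' Ico b c = Ico (b + 2 * π * n) (c + 2 * π * n) :=
  image_add_const_Ico _ b c

lemma dyadicDilate_image_Ico (n : ℤ) (b c : ℝ) :
    dyadicDilate n '' Ico b c = Ico (2 ^ n * b) (2 ^ n * c) :=
  image_mul_left_Ico (by positivity) b c

lemma dyadicDilate_image_Ioo (n : ℤ) (b c : ℝ) :
    dyadicDilate n '' Ioo b c = Ioo (2 ^ n * b) (2 ^ n * c) :=
  image_mul_left_Ioo (by positivity) b c

lemma tiles_twoPiTranslate_Ico (a : ℝ) : Tiles twoPiTranslate (Ico a (a + 2 * π)) :=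
  ae_of_all _ fun x => (existsUnique_congr fun n => by
    rw [twoPiTranslate, zsmul_eq_mul, mul_comm (n : ℝ)]).1
      (existsUnique_add_zsmul_mem_Ico Real.two_pi_pos x a)

lemma existsUnique_two_zpow_mul_mem_Ico_s16 {a x : ℝ} (ha : 0 < a) (hx : 0 < x) :
    ∃! k : ℤ, (2 : ℝ) ^ k * x ∈ Ico a (2 * a) := by
  refine (existsUnique_congr fun k => ?_).1
    (existsUnique_add_zsmul_mem_Ico (Real.log_pos one_lt_two) (Real.log x) (Real.log a))
  have hk : 0 < (2 : ℝ) ^ k * x := by positivity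
  rw [zsmul_eq_mul, ← Real.log_zpow, ← Real.log_mul hx.ne' (by positivity), mul_comm x,
    ← Real.log_mul ha.ne' two_ne_zero, mul_comm a, mem_Ico, mem_Ico, Real.log_le_log_iff ha hk,
    Real.log_lt_log_iff hk (by positivity)]

lemma existsUnique_two_zpow_mul_mem_Ioc {a x : ℝ} (ha : 0 < a) (hx : 0 < x) :
    ∃! k : ℤ, (2 : ℝ) ^ k * x ∈ Ioc a (2 * a) := by
  refine (existsUnique_congr fun k => ?_).1
    (existsUnique_add_zsmul_mem_Ioc (Real.log_pos one_lt_two) (Real.log x) (Real.log a))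
  have hk : 0 < (2 : ℝ) ^ k * x := by positivity
  rw [zsmul_eq_mul, ← Real.log_zpow, ← Real.log_mul hx.ne' (by positivity), mul_comm x,
    ← Real.log_mul ha.ne' two_ne_zero, mul_comm a, mem_Ioc, mem_Ioc, Real.log_lt_log_iff ha hk,
    Real.log_le_log_iff hk (by positivity)]

lemma existsUnique_two_zpow_mul_mem_Ico_of_neg {d x : ℝ} (hd : d < 0) (hx : x < 0) :
    ∃! k : ℤ, (2 : ℝ) ^ k * x ∈ Ico (2 * d) d := by
  refine (existsUnique_congr fun k => ?_).1
    (existsUnique_two_zpow_mul_mem_Ioc (neg_pos.2 hd) (neg_pos.2 hx))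
  simp only [mem_Ioc, mem_Ico, mul_neg, neg_lt_neg_iff, neg_le_neg_iff, and_comm]

lemma tiles_dyadicDilate_Ico_union_Ico {d a : ℝ} (hd : d < 0) (ha : 0 < a) :
    Tiles dyadicDilate (Ico (2 * d) d ∪ Ico a (2 * a)) := by
  filter_upwards [Measure.ae_ne volume 0] with x hx
  rcases hx.lt_or_gt with hx | hx
  · refine (existsUnique_congr fun k => ?_).1 (existsUnique_two_zpow_mul_mem_Ico_of_neg hd hx)
    have hk : (2 : ℝ) ^ k * x < 0 := mul_neg_of_pos_of_neg (by positivity) hx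
    exact (or_iff_left fun h => (hk.trans (ha.trans_le h.1)).false).symm
  · refine (existsUnique_congr fun k => ?_).1 (existsUnique_two_zpow_mul_mem_Ico_s16 ha hx)
    have hk : 0 < (2 : ℝ) ^ k * x := by positivity
    exact (or_iff_right fun h => (hk.trans (h.2.trans hd)).false).symm

lemma two_le_two_zpow {l : ℤ} (hl : 1 ≤ l) : (2 : ℝ) ≤ 2 ^ l := by
  simpa using zpow_le_zpow_right₀ one_le_two hl

lemma exists_two_mul_intCast_eq_two_zpow {l : ℤ} (hl : 1 ≤ l) : ∃ K : ℤ, 2 * (K : ℝ) = 2 ^ l :=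
  ⟨2 ^ (l - 1).toNat, by
    rw [Int.cast_pow, Int.cast_ofNat, ← zpow_natCast, Int.toNat_of_nonneg (by omega),
      ← zpow_one_add₀ two_ne_zero, add_sub_cancel]⟩

theorem transCongruent_Gplus {l m : ℤ} (hl : 1 ≤ l) (hm : 1 ≤ m) :
    TransCongruent (Gplus l m) (Ico 0 ((2 : ℝ) ^ (1 - m) * π)) := by
  obtain ⟨K, hK⟩ := exists_two_mul_intCast_eq_two_zpow hl
  have hL := two_le_two_zpow hl
  have hM := two_le_two_zpow hm
  change IsCongruentUnder twoPiTranslate _ _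
  rw [Gplus, zpow_add₀ two_ne_zero, zpow_sub₀ two_ne_zero, zpow_one]
  generalize (2 : ℝ) ^ l = L at *
  generalize (2 : ℝ) ^ m = M at *
  have hLM : 1 ≤ L * M - 1 := by nlinarith
  set A := L / (L * M - 1) * π
  have hA : 0 < A := mul_pos (div_pos (by linarith) (by linarith)) Real.pi_pos
  have hAc : A < 2 / M * π := mul_lt_mul_of_pos_right
    (by rw [div_lt_div_iff₀ (by linarith) (by linarith)]; nlinarith) Real.pi_pos
  have hcL : 2 / M * π ≤ L * π := mul_le_mul_of_nonneg_right
    (by rw [div_le_iff₀ (by linarith)]; nlinarith) Real.pi_pos.le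
  have h₁ : twoPiTranslate 0 '' Ioo A (2 / M * π) = Ioo A (2 / M * π) := by
    rw [twoPiTranslate_zero, image_id]
  have h₂ : twoPiTranslate (-K) '' Ico (L * π) (L * π + A) = Ico 0 A := by
    rw [twoPiTranslate_image_Ico, Int.cast_neg]
    congr 1 <;> linear_combination (-π) * hK
  refine ((IsCongruentUnder.of_image_eq measurableSet_Ioo 0 h₁).union
    (IsCongruentUnder.of_image_eq measurableSet_Ico (-K) h₂) ?_ ?_).congr_right
    (Ioo_union_Ico_ae_eq hA.le hAc.le)
  · exact aedisjoint_of_forall_lt fun x hx y hy => by linarith [hx.2, hy.1]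
  · exact (aedisjoint_of_forall_lt fun x hx y hy => hx.2.trans hy.1).symm

theorem dilCongruent_Gplus {l m : ℤ} (hl : 1 ≤ l) (hm : 1 ≤ m) :
    DilCongruent (Gplus l m) (Ico π (2 * π)) := by
  have hL := two_le_two_zpow hl
  have hM := two_le_two_zpow hm
  change IsCongruentUnder dyadicDilate _ _
  rw [Gplus, zpow_add₀ two_ne_zero, zpow_sub₀ two_ne_zero, zpow_one]
  generalize hL_def : (2 : ℝ) ^ l = L at *
  generalize hM_def : (2 : ℝ) ^ m = M at *
  have hLM : 1 ≤ L * M - 1 := by nlinarith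
  set A := L / (L * M - 1) * π
  have hA : 0 < A := mul_pos (div_pos (by linarith) (by linarith)) Real.pi_pos
  have hAL : A ≤ L * π := mul_le_mul_of_nonneg_right
    (div_le_self (by linarith) hLM) Real.pi_pos.le
  have hA_eq : L * π + A = L * (M * A) := by
    simp only [A]
    field_simp
    ring
  have hcL : 2 / M * π ≤ L * π := mul_le_mul_of_nonneg_right
    (by rw [div_le_iff₀ (by linarith)]; nlinarith) Real.pi_pos.le
  have h₁ : dyadicDilate m '' Ioo A (2 / M * π) = Ioo (M * A) (2 * π) := by
    rw [dyadicDilate_image_Ioo, hM_def]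
    congr 1
    field_simp
  have h₂ : dyadicDilate (-l) '' Ico (L * π) (L * π + A) = Ico π (M * A) := by
    rw [dyadicDilate_image_Ico, zpow_neg, hL_def, hA_eq]
    congr 1 <;> field_simp
  refine ((IsCongruentUnder.of_image_eq measurableSet_Ioo m h₁).union
    (IsCongruentUnder.of_image_eq measurableSet_Ico (-l) h₂) ?_ ?_).congr_right
    (Ioo_union_Ico_ae_eq (by nlinarith) (by nlinarith))
  · exact aedisjoint_of_forall_lt fun x hx y hy => by linarith [hx.2, hy.1]
  · exact (aedisjoint_of_forall_lt fun x hx y hy => hx.2.trans hy.1).symm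

theorem transCongruent_Gminus {m n : ℤ} (hm : 1 ≤ m) (hn : 1 ≤ n) :
    TransCongruent (Gminus m n) (Ico (-(2 * π) + (2 : ℝ) ^ (1 - m) * π) 0) := by
  obtain ⟨K₁, hK₁⟩ := exists_two_mul_intCast_eq_two_zpow (by omega : 1 ≤ m + n)
  obtain ⟨K₂, hK₂⟩ := exists_two_mul_intCast_eq_two_zpow hn
  have hM := two_le_two_zpow hm
  have hN := two_le_two_zpow hn
  change IsCongruentUnder twoPiTranslate _ _
  rw [zpow_add₀ two_ne_zero] at hK₁
  rw [Gminus, zpow_add₀ two_ne_zero, zpow_sub₀ two_ne_zero, zpow_one]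
  generalize (2 : ℝ) ^ m = M at *
  generalize (2 : ℝ) ^ n = N at *
  have hMN : 1 ≤ M * N - 1 := by nlinarith
  set B := (M * N - N) / (M * N - 1) * π
  have hB : 0 ≤ B := mul_nonneg (div_nonneg (by nlinarith) (by linarith)) Real.pi_pos.le
  have hBπ : B ≤ π := mul_le_of_le_one_left Real.pi_pos.le
    ((div_le_one (by linarith)).2 (by linarith))
  have hc_pos : 0 < 2 / M * π := mul_pos (div_pos two_pos (by linarith)) Real.pi_pos
  have hc_le : 2 / M * π ≤ π := mul_le_of_le_one_left Real.pi_pos.le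
    ((div_le_one (by linarith)).2 hM)
  have hS : -(M * N) * π + N * π ≤ -(2 * π) := by
    nlinarith [mul_le_mul_of_nonneg_right (by nlinarith : 2 ≤ M * N - N) Real.pi_pos.le]
  have h₁ : twoPiTranslate (K₁ - K₂) '' Ico (-(M * N) * π + N * π - B) (-(M * N) * π + N * π) =
      Ico (-B) 0 := by
    rw [twoPiTranslate_image_Ico, Int.cast_sub]
    congr 1 <;> linear_combination π * hK₁ - π * hK₂
  have h₂ : twoPiTranslate 0 '' Ico (-(2 * π) + 2 / M * π) (-B) =
      Ico (-(2 * π) + 2 / M * π) (-B) := by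
    rw [twoPiTranslate_zero, image_id]
  refine ((IsCongruentUnder.of_image_eq measurableSet_Ico _ h₁).union
    (IsCongruentUnder.of_image_eq measurableSet_Ico 0 h₂) ?_ ?_).congr_right
    (.of_eq (by rw [union_comm, Ico_union_Ico_eq_Ico (by linarith) (by linarith)]))
  · exact aedisjoint_of_forall_lt fun x hx y hy => by linarith [hx.2, hy.1]
  · exact (aedisjoint_of_forall_lt fun x hx y hy => hx.2.trans_le hy.1).symm

theorem dilCongruent_Gminus {m n : ℤ} (hm : 1 ≤ m) (hn : 1 ≤ n) :
    DilCongruent (Gminus m n)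
      (Ico (-(2 * π) + (2 : ℝ) ^ (1 - m) * π) (-π + (2 : ℝ) ^ (-m) * π)) := by
  have hM := two_le_two_zpow hm
  have hN := two_le_two_zpow hn
  change IsCongruentUnder dyadicDilate _ _
  rw [Gminus, zpow_add₀ two_ne_zero, zpow_sub₀ two_ne_zero, zpow_one, zpow_neg]
  generalize hM_def : (2 : ℝ) ^ m = M at *
  generalize hN_def : (2 : ℝ) ^ n = N at *
  have hMN : 1 ≤ M * N - 1 := by nlinarith
  set B := (M * N - N) / (M * N - 1) * π
  have hB_eq : -(M * N) * π + N * π - B = M * N * -B := by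
    simp only [B]
    field_simp
    ring
  have hBπ : B ≤ π := mul_le_of_le_one_left Real.pi_pos.le
    ((div_le_one (by linarith)).2 (by linarith))
  have hc_pos : 0 < 2 / M * π := mul_pos (div_pos two_pos (by linarith)) Real.pi_pos
  have hc_le : 2 / M * π ≤ π := mul_le_of_le_one_left Real.pi_pos.le
    ((div_le_one (by linarith)).2 hM)
  have hBM : π - M⁻¹ * π ≤ B := by
    have h : B - (π - M⁻¹ * π) = (M - 1) * π / (M * (M * N - 1)) := by
      simp only [B]
      field_simp
      ring
    have : 0 ≤ (M - 1) * π / (M * (M * N - 1)) :=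
      div_nonneg (mul_nonneg (by linarith) Real.pi_pos.le) (by nlinarith)
    linarith
  have hS : -(M * N) * π + N * π ≤ -(2 * π) := by
    nlinarith [mul_le_mul_of_nonneg_right (by nlinarith : 2 ≤ M * N - N) Real.pi_pos.le]
  have h₁ : dyadicDilate (-(m + n)) '' Ico (-(M * N) * π + N * π - B) (-(M * N) * π + N * π) =
      Ico (-B) (-π + M⁻¹ * π) := by
    rw [dyadicDilate_image_Ico, zpow_neg, zpow_add₀ two_ne_zero, hM_def, hN_def, hB_eq]
    congr 1 <;> field_simp
  have h₂ : dyadicDilate 0 '' Ico (-(2 * π) + 2 / M * π) (-B) =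
      Ico (-(2 * π) + 2 / M * π) (-B) := by
    rw [dyadicDilate_zero, image_id]
  refine ((IsCongruentUnder.of_image_eq measurableSet_Ico _ h₁).union
    (IsCongruentUnder.of_image_eq measurableSet_Ico 0 h₂) ?_ ?_).congr_right
    (.of_eq (by rw [union_comm, Ico_union_Ico_eq_Ico (by linarith) (by linarith)]))
  · exact aedisjoint_of_forall_lt fun x hx y hy => by linarith [hx.2, hy.1]
  · exact (aedisjoint_of_forall_lt fun x hx y hy => hx.2.trans_le hy.1).symm

lemma Gplus_subset_Ioi_zero {l m : ℤ} (hl : 1 ≤ l) (hm : 1 ≤ m) : Gplus l m ⊆ Ioi 0 := by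
  have hLM := two_le_two_zpow (by omega : 1 ≤ l + m)
  have hA : 0 < (2 : ℝ) ^ l / ((2 : ℝ) ^ (l + m) - 1) * π :=
    mul_pos (div_pos (by positivity) (by linarith)) Real.pi_pos
  rintro x (hx | hx)
  · exact hA.trans hx.1
  · exact (by positivity : (0 : ℝ) < 2 ^ l * π).trans_le hx.1

lemma Gminus_subset_Iio_zero {m n : ℤ} (hm : 1 ≤ m) (hn : 1 ≤ n) : Gminus m n ⊆ Iio 0 := by
  have hNP : (2 : ℝ) ^ n < 2 ^ (m + n) := zpow_lt_zpow_right₀ one_lt_two (by omega)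
  have hN := two_le_two_zpow hn
  have hB : 0 ≤ ((2 : ℝ) ^ (m + n) - 2 ^ n) / (2 ^ (m + n) - 1) * π :=
    mul_nonneg (div_nonneg (by linarith) (by linarith)) Real.pi_pos.le
  rintro x (hx | hx)
  · exact hx.2.trans_le (by nlinarith [Real.pi_pos])
  · exact hx.2.trans_le (by linarith)

/-- Example 10 of the paper.  For integers `l, m, n ≥ 1`, the set
`G₊(l, m)` is `2π`-translation congruent to `[0, 2^{1−m}π)` and `2`-dilation congruent
to `[π, 2π)`; the set `G₋(m, n)` is `2π`-translation congruent to `[−2π + 2^{1−m}π, 0)`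
and `2`-dilation congruent to `[−2π + 2^{1−m}π, −π + 2^{−m}π)`; and consequently
`G₋(m, n) ∪ G₊(l, m)` is a dyadic wavelet set (the Fang–Wang sets `K_{l,m,n}`). -/
theorem stmt_16 (l m n : ℤ) (hl : 1 ≤ l) (hm : 1 ≤ m) (hn : 1 ≤ n) :
    TransCongruent (Gplus l m) (Ico 0 ((2 : ℝ) ^ (1 - m) * π)) ∧
    DilCongruent (Gplus l m) (Ico π (2 * π)) ∧
    TransCongruent (Gminus m n) (Ico (-(2 * π) + (2 : ℝ) ^ (1 - m) * π) 0) ∧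
    DilCongruent (Gminus m n)
      (Ico (-(2 * π) + (2 : ℝ) ^ (1 - m) * π) (-π + (2 : ℝ) ^ (-m) * π)) ∧
    IsDyadicWaveletSet (Gminus m n ∪ Gplus l m) := by
  have hTp := transCongruent_Gplus hl hm
  have hDp := dilCongruent_Gplus hl hm
  have hTm := transCongruent_Gminus hm hn
  have hDm := dilCongruent_Gminus hm hn
  have hdisj : AEDisjoint volume (Gminus m n) (Gplus l m) :=
    aedisjoint_of_forall_lt fun x hx y hy =>
      (Gminus_subset_Iio_zero hm hn hx).trans (Gplus_subset_Ioi_zero hl hm hy)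
  have hc : (2 : ℝ) ^ (1 - m) * π = 2 * (2 ^ (-m) * π) := by
    rw [sub_eq_add_neg, zpow_add₀ two_ne_zero, zpow_one, mul_assoc]
  have hd : (2 : ℝ) ^ (-m) < 1 := zpow_lt_one_of_neg₀ one_lt_two (by omega)
  refine ⟨hTp, hDp, hTm, hDm, ?_, ?_, ?_⟩
  · exact (measurableSet_Ico.union measurableSet_Ico).union
      (measurableSet_Ioo.union measurableSet_Ico)
  · refine Tiles.of_transCongruent (IsCongruentUnder.union (g := twoPiTranslate) hTm hTp hdisj
      (aedisjoint_of_forall_lt fun x hx y hy => hx.2.trans_le hy.1)) ?_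
    rw [Ico_union_Ico_eq_Ico (by nlinarith [Real.pi_pos]) (by positivity)]
    simpa only [neg_add_cancel_comm] using tiles_twoPiTranslate_Ico (-(2 * π) + 2 ^ (1 - m) * π)
  · refine Tiles.of_dilCongruent (IsCongruentUnder.union (g := dyadicDilate) hDm hDp hdisj
      (aedisjoint_of_forall_lt fun x hx y hy => by nlinarith [hx.2, hy.1, Real.pi_pos])) ?_
    rw [hc, show -(2 * π) + 2 * (2 ^ (-m) * π) = 2 * (-π + 2 ^ (-m) * π) by ring]
    exact tiles_dyadicDilate_Ico_union_Ico (by nlinarith [Real.pi_pos]) Real.pi_pos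
end
end
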